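/- arXiv:2402.15867 — 11 statements merged into one kernel-verified Lean document; each statement's English description precedes it below -/
import Mathlib

section
/- Let G be a group acting on a set X, and let A, B ⊆ X. If A is G-embeddable in B and B is G-embeddable in A, then A and B are G-equidecomposable. -/
open scoped Pointwise
/-- Two subsets `A` and `B` of a `G`-set `X` are `G`-equidecomposable if there are
finitely many pairwise disjoint pieces `P i` whose union is `A` and group elements
`g i` such that the translates `g i • P i` are pairwise disjoint with union `B`. -/
def Equidecomposable (G : Type*) [Group G] {X : Type*} [MulAction G X]
    (A B : Set X) : Prop :=
  ∃ (n : ℕ) (P : Fin n → Set X) (g : Fin n → G),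
    (∀ i j, i ≠ j → Disjoint (P i) (P j)) ∧
    (⋃ i, P i) = A ∧
    (∀ i j, i ≠ j → Disjoint (g i • P i) (g j • P j)) ∧
    (⋃ i, g i • P i) = B

/-- `A` is `G`-embeddable in `B` if `A` is `G`-equidecomposable with a subset of `B`. -/
def Embeddable (G : Type*) [Group G] {X : Type*} [MulAction G X]
    (A B : Set X) : Prop :=
  ∃ B' : Set X, B' ⊆ B ∧ Equidecomposable G A B'

section Aux

variable {G X : Type*} [Group G] [MulAction G X]

lemma equi_symm {A B : Set X} (h : Equidecomposable G A B) : Equidecomposable G B A := by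
  obtain ⟨n, P, g, hP, hPA, hg, hgB⟩ := h
  refine ⟨n, fun i => g i • P i, fun i => (g i)⁻¹, hg, hgB, ?_, ?_⟩
  · intro i j hij
    simpa [inv_smul_smul] using hP i j hij
  · simp only [inv_smul_smul]
    exact hPA

lemma equi_union {A₁ A₂ B₁ B₂ : Set X} (h₁ : Equidecomposable G A₁ B₁)
    (h₂ : Equidecomposable G A₂ B₂) (hA : Disjoint A₁ A₂) (hB : Disjoint B₁ B₂) :
    Equidecomposable G (A₁ ∪ A₂) (B₁ ∪ B₂) := by
  obtain ⟨n, P, g, hP, hPA, hg, hgB⟩ := h₁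
  obtain ⟨m, Q, k, hQ, hQA, hk, hkB⟩ := h₂
  have hPsub : ∀ a, P a ⊆ A₁ := fun a => hPA ▸ Set.subset_iUnion P a
  have hQsub : ∀ b, Q b ⊆ A₂ := fun b => hQA ▸ Set.subset_iUnion Q b
  have hgsub : ∀ a, g a • P a ⊆ B₁ := fun a => hgB ▸ Set.subset_iUnion (fun i => g i • P i) a
  have hksub : ∀ b, k b • Q b ⊆ B₂ := fun b => hkB ▸ Set.subset_iUnion (fun j => k j • Q j) b
  refine ⟨n + m, fun i => Sum.elim P Q (finSumFinEquiv.symm i),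
    fun i => Sum.elim g k (finSumFinEquiv.symm i), ?_, ?_, ?_, ?_⟩
  · intro i j hij
    have hst : finSumFinEquiv.symm i ≠ finSumFinEquiv.symm j :=
      fun h => hij (finSumFinEquiv.symm.injective h)
    rcases hs : finSumFinEquiv.symm i with a | b <;> rcases ht : finSumFinEquiv.symm j with a' | b' <;>
      simp only [hs, ht, Sum.elim_inl, Sum.elim_inr]
    · exact hP a a' (by rintro rfl; exact hst (hs.trans ht.symm))
    · exact hA.mono (hPsub a) (hQsub b')
    · exact (hA.mono (hPsub a') (hQsub b)).symm
    · exact hQ b b' (by rintro rfl; exact hst (hs.trans ht.symm))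
  · rw [finSumFinEquiv.symm.surjective.iUnion_comp (fun s => Sum.elim P Q s),
      Set.iUnion_sum]
    simp [hPA, hQA]
  · intro i j hij
    have hst : finSumFinEquiv.symm i ≠ finSumFinEquiv.symm j :=
      fun h => hij (finSumFinEquiv.symm.injective h)
    rcases hs : finSumFinEquiv.symm i with a | b <;> rcases ht : finSumFinEquiv.symm j with a' | b' <;>
      simp only [hs, ht, Sum.elim_inl, Sum.elim_inr]
    · exact hg a a' (by rintro rfl; exact hst (hs.trans ht.symm))
    · exact hB.mono (hgsub a) (hksub b')
    · exact (hB.mono (hgsub a') (hksub b)).symm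
    · exact hk b b' (by rintro rfl; exact hst (hs.trans ht.symm))
  · rw [finSumFinEquiv.symm.surjective.iUnion_comp
      (fun s => Sum.elim g k s • Sum.elim P Q s), Set.iUnion_sum]
    simp only [Sum.elim_inl, Sum.elim_inr]
    rw [hgB, hkB]

end Aux

/-- Banach–Tarski (Schröder–Bernstein for equidecomposability): if `A ≺ B` and `B ≺ A`
then `A ∼ B`. -/
theorem equidecomposable_of_embeddable_of_embeddable
    {G X : Type*} [Group G] [MulAction G X] {A B : Set X}
    (hAB : Embeddable G A B) (hBA : Embeddable G B A) :
    Equidecomposable G A B := by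
  obtain ⟨B', hB'B, n, P, g, hP, hPA, hg, hgB⟩ := hAB
  obtain ⟨A', hA'A, m, Q, k, hQ, hQB, hk, hkA⟩ := hBA
  set F : Set X → Set X := fun S => ⋃ i, g i • (P i ∩ S) with hF
  set K : Set X → Set X := fun T => ⋃ j, k j • (Q j ∩ T) with hK
  have hFmono : Monotone F := fun S S' hSS' =>
    Set.iUnion_mono fun i => Set.smul_set_mono (Set.inter_subset_inter_right _ hSS')
  have hKmono : Monotone K := fun T T' hTT' =>
    Set.iUnion_mono fun j => Set.smul_set_mono (Set.inter_subset_inter_right _ hTT')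
  have hFsub : ∀ S, F S ⊆ B := by
    intro S
    refine subset_trans ?_ hB'B
    rw [← hgB]
    exact Set.iUnion_mono fun i => Set.smul_set_mono Set.inter_subset_left
  have hKsub : ∀ T, K T ⊆ A := by
    intro T
    refine subset_trans ?_ hA'A
    rw [← hkA]
    exact Set.iUnion_mono fun j => Set.smul_set_mono Set.inter_subset_left
  -- S ∼ F S for S ⊆ A
  have hFequi : ∀ S, S ⊆ A → Equidecomposable G S (F S) := by
    intro S hS
    refine ⟨n, fun i => P i ∩ S, g, ?_, ?_, ?_, rfl⟩
    · exact fun i j hij => (hP i j hij).mono Set.inter_subset_left Set.inter_subset_left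
    · rw [← Set.iUnion_inter, hPA, Set.inter_eq_right.mpr hS]
    · exact fun i j hij => (hg i j hij).mono (Set.smul_set_mono Set.inter_subset_left)
        (Set.smul_set_mono Set.inter_subset_left)
  have hKequi : ∀ T, T ⊆ B → Equidecomposable G T (K T) := by
    intro T hT
    refine ⟨m, fun j => Q j ∩ T, k, ?_, ?_, ?_, rfl⟩
    · exact fun i j hij => (hQ i j hij).mono Set.inter_subset_left Set.inter_subset_left
    · rw [← Set.iUnion_inter, hQB, Set.inter_eq_right.mpr hT]
    · exact fun i j hij => (hk i j hij).mono (Set.smul_set_mono Set.inter_subset_left)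
        (Set.smul_set_mono Set.inter_subset_left)
  -- Knaster–Tarski fixed point
  have hΦmono : Monotone (fun S => A \ K (B \ F S)) := by
    intro S S' hSS'
    exact Set.diff_subset_diff_right (hKmono (Set.diff_subset_diff_right (hFmono hSS')))
  set C := OrderHom.lfp ⟨fun S => A \ K (B \ F S), hΦmono⟩ with hCdef
  have hfix : A \ K (B \ F C) = C := OrderHom.map_lfp ⟨fun S => A \ K (B \ F S), hΦmono⟩
  have hCA : C ⊆ A := by rw [← hfix]; exact Set.diff_subset
  have hAC : A \ C = K (B \ F C) := by
    conv_lhs => rw [← hfix]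
    exact Set.diff_diff_cancel_left (hKsub _)
  have h1 : Equidecomposable G C (F C) := hFequi C hCA
  have h2 : Equidecomposable G (A \ C) (B \ F C) := by
    rw [hAC]
    exact equi_symm (hKequi _ Set.diff_subset)
  have hall := equi_union h1 h2 Set.disjoint_sdiff_right Set.disjoint_sdiff_right
  rwa [Set.union_diff_cancel hCA, Set.union_diff_cancel (hFsub C)] at hall
end

section
/- If the free group F₂ on two generators acts freely on a set X (that is, g.x ≠ x for every g ∈ F₂ \ {1} and every x ∈ X), then X is F₂-paradoxical with respect to this action. -/
open scoped Pointwise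

/-- `X` is `G`-paradoxical if there are two disjoint subsets of `X`, each
`G`-equidecomposable with all of `X`. -/
def Paradoxical (G : Type*) [Group G] (X : Type*) [MulAction G X] : Prop :=
  ∃ A B : Set X, Disjoint A B ∧
    Equidecomposable G A (Set.univ : Set X) ∧ Equidecomposable G B (Set.univ : Set X)

/-- The reduced word of `mk [ℓ] * g` starts with the letter `ℓ` if and only if the
reduced word of `g` does not start with the inverse letter of `ℓ`. -/
lemma head_toWord_mk_singleton_mul {α : Type*} [DecidableEq α] (ℓ : α × Bool) (g : FreeGroup α) :
    (FreeGroup.mk [ℓ] * g).toWord.head? = some ℓ ↔ g.toWord.head? ≠ some (ℓ.1, !ℓ.2) := by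
  conv_lhs => rw [← FreeGroup.mk_toWord (x := g)]
  rw [FreeGroup.mul_mk, FreeGroup.toWord_mk, List.singleton_append, FreeGroup.reduce.cons,
    FreeGroup.reduce_toWord]
  cases h : g.toWord with
  | nil => simp
  | cons hd tl =>
    dsimp only
    by_cases hc : ℓ.1 = hd.1 ∧ ℓ.2 = !hd.2
    · have hd_eq : hd = (ℓ.1, !ℓ.2) := by
        rw [Prod.ext_iff]
        exact ⟨hc.1.symm, by rw [hc.2, Bool.not_not]⟩
      rw [if_pos hc]
      refine iff_of_false (fun htl => ?_) (by rw [List.head?_cons, hd_eq]; simp)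
      cases tl with
      | nil => simp at htl
      | cons y tl' =>
        simp only [List.head?_cons, Option.some.injEq] at htl
        subst htl
        have hpat : FreeGroup.reduce g.toWord
            = [] ++ (y.1, !y.2) :: (y.1, !(!y.2)) :: tl' := by
          rw [FreeGroup.reduce_toWord, h, hd_eq, Bool.not_not]; simp
        exact FreeGroup.reduce.not hpat
    · rw [if_neg hc]
      refine iff_of_true rfl fun hcon => hc ?_
      rw [List.head?_cons, Option.some.injEq] at hcon
      exact ⟨by rw [hcon], by rw [hcon, Bool.not_not]⟩

/-- If the free group on two generators acts freely on `X`, then `X` is paradoxical. -/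
theorem paradoxical_of_free_action_freeGroup
    {X : Type*} [MulAction (FreeGroup (Fin 2)) X]
    (hfree : ∀ (g : FreeGroup (Fin 2)) (x : X), g • x = x → g = 1) :
    Paradoxical (FreeGroup (Fin 2)) X := by
  classical
  have hex : ∀ x : X, ∃ g : FreeGroup (Fin 2),
      g • (Quotient.mk (MulAction.orbitRel (FreeGroup (Fin 2)) X) x).out = x := by
    intro x
    have h := Quotient.mk_out (s := MulAction.orbitRel (FreeGroup (Fin 2)) X) x
    rw [MulAction.orbitRel_apply] at h
    obtain ⟨g, hg⟩ := h
    exact ⟨g⁻¹, by rw [← hg, inv_smul_smul]⟩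
  choose σ hσ using hex
  have huniq : ∀ (x : X) (g : FreeGroup (Fin 2)),
      g • (Quotient.mk (MulAction.orbitRel (FreeGroup (Fin 2)) X) x).out = x → g = σ x := by
    intro x g hg
    have h2 : ((σ x)⁻¹ * g) • (Quotient.mk (MulAction.orbitRel (FreeGroup (Fin 2)) X) x).out
        = (Quotient.mk (MulAction.orbitRel (FreeGroup (Fin 2)) X) x).out := by
      rw [mul_smul, hg]
      exact inv_smul_eq_iff.mpr (hσ x).symm
    have h1 := hfree _ _ h2
    rw [inv_mul_eq_one] at h1
    exact h1.symm
  have rep_smul : ∀ (g : FreeGroup (Fin 2)) (x : X),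
      (Quotient.mk (MulAction.orbitRel (FreeGroup (Fin 2)) X) (g • x)).out
        = (Quotient.mk (MulAction.orbitRel (FreeGroup (Fin 2)) X) x).out := by
    intro g x
    congr 1
    exact Quotient.sound (MulAction.orbitRel_apply.mpr ⟨g, rfl⟩)
  have σ_smul : ∀ (g : FreeGroup (Fin 2)) (x : X), σ (g • x) = g * σ x := by
    intro g x
    exact (huniq (g • x) (g * σ x) (by rw [rep_smul, mul_smul, hσ x])).symm
  set W : Fin 2 × Bool → Set X := fun ℓ => {x | (σ x).toWord.head? = some ℓ} with hW
  have hWdisj : ∀ ℓ ℓ', ℓ ≠ ℓ' → Disjoint (W ℓ) (W ℓ') := by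
    intro ℓ ℓ' hne
    rw [Set.disjoint_left]
    intro x hx hx'
    exact hne (Option.some_injective _ ((hx.symm.trans hx') : some ℓ = some ℓ'))
  have hkey : ∀ i : Fin 2, (FreeGroup.of i) • W (i, false) = (W (i, true))ᶜ := by
    intro i
    ext y
    rw [Set.mem_smul_set_iff_inv_smul_mem]
    have hinv : (FreeGroup.of i)⁻¹ = FreeGroup.mk [((i : Fin 2), false)] := by
      rw [FreeGroup.of, FreeGroup.inv_mk]; rfl
    have hmem : ((FreeGroup.of i)⁻¹ • y) ∈ W (i, false)
        ↔ (σ ((FreeGroup.of i)⁻¹ • y)).toWord.head? = some (i, false) := Iff.rfl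
    rw [hmem, σ_smul, hinv, head_toWord_mk_singleton_mul]
    simp [hW]
  have equid : ∀ i : Fin 2, Equidecomposable (FreeGroup (Fin 2))
      (W (i, true) ∪ W (i, false)) (Set.univ : Set X) := by
    intro i
    refine ⟨2, ![W (i, true), W (i, false)], ![1, FreeGroup.of i], ?_, ?_, ?_, ?_⟩
    · intro j k hjk
      fin_cases j <;> fin_cases k <;> simp at hjk ⊢ <;>
        first
          | exact hWdisj _ _ (by simp)
          | exact (hWdisj _ _ (by simp)).symm
    · ext x
      simp [Fin.exists_fin_two]
    · have h0 : (1 : FreeGroup (Fin 2)) • W (i, true) = W (i, true) := one_smul _ _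
      intro j k hjk
      fin_cases j <;> fin_cases k <;> simp at hjk ⊢ <;>
        rw [hkey] <;>
        first
          | exact disjoint_compl_right
          | exact disjoint_compl_left
    · ext x
      simp only [Set.mem_iUnion, Fin.exists_fin_two, Matrix.cons_val_zero, Matrix.cons_val_one,
        Matrix.head_cons, Set.mem_univ, iff_true]
      rw [one_smul, hkey]
      by_cases hx : x ∈ W (i, true)
      · exact Or.inl hx
      · exact Or.inr hx
  refine ⟨W (0, true) ∪ W (0, false), W (1, true) ∪ W (1, false), ?_, equid 0, equid 1⟩
  rw [Set.disjoint_union_left, Set.disjoint_union_right, Set.disjoint_union_right]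
  exact ⟨⟨hWdisj _ _ (by decide), hWdisj _ _ (by decide)⟩,
    ⟨hWdisj _ _ (by decide), hWdisj _ _ (by decide)⟩⟩
end

section
/- If D is a countable subset of the unit sphere S² = {x ∈ ℝ³ : ‖x‖ = 1}, then S² and S² \ D are equidecomposable with respect to the natural action of the special orthogonal group SO(3) on ℝ³. -/
open scoped Pointwise

/-- The group structure on `SO(3)` (the special orthogonal group of real `3 × 3` matrices). -/
noncomputable instance : Group ↥(Matrix.specialOrthogonalGroup (Fin 3) ℝ) :=
  { (inferInstance : Monoid ↥(Matrix.specialOrthogonalGroup (Fin 3) ℝ)) with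
    inv := fun A => ⟨star (A : Matrix (Fin 3) (Fin 3) ℝ), by
      have hA := Matrix.mem_specialOrthogonalGroup_iff.mp A.2
      refine Matrix.mem_specialOrthogonalGroup_iff.mpr ⟨Unitary.star_mem hA.1, ?_⟩
      have : (A : Matrix (Fin 3) (Fin 3) ℝ).det = 1 := hA.2
      simp [Matrix.star_eq_conjTranspose, Matrix.det_conjTranspose, this]⟩
    inv_mul_cancel := fun A => Subtype.ext (Matrix.mem_specialOrthogonalGroup_iff.mp A.2).1.1 }

/-- The natural action of `SO(3)` on `ℝ³`, by matrix-vector multiplication. -/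
noncomputable instance : MulAction ↥(Matrix.specialOrthogonalGroup (Fin 3) ℝ)
    (EuclideanSpace ℝ (Fin 3)) where
  smul g x := WithLp.toLp 2 ((g : Matrix (Fin 3) (Fin 3) ℝ).mulVec x)
  one_smul x := by
    show WithLp.toLp 2 ((((1 : ↥(Matrix.specialOrthogonalGroup (Fin 3) ℝ)) :
      Matrix (Fin 3) (Fin 3) ℝ)).mulVec x) = x
    simp
  mul_smul g h x := by
    show WithLp.toLp 2 (((g * h : ↥(Matrix.specialOrthogonalGroup (Fin 3) ℝ)) :
        Matrix (Fin 3) (Fin 3) ℝ).mulVec x)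
      = WithLp.toLp 2 ((g : Matrix (Fin 3) (Fin 3) ℝ).mulVec
        (WithLp.ofLp (WithLp.toLp 2 ((h : Matrix (Fin 3) (Fin 3) ℝ).mulVec x))))
    rw [Submonoid.coe_mul, ← Matrix.mulVec_mulVec, WithLp.ofLp_toLp]

/-!
Choose an axis through the origin that misses the countable set `D` and rotate about it by an
angle `θ`. For fixed `n ≥ 1` and `d, e ∈ D` only countably many `θ` make the `n`-th power of the
rotation send `d` to `e`, so for some `θ` the rotation `g` satisfies `gⁿ D ∩ D = ∅` for all
`n ≥ 1`. Then `E = ⋃ₙ gⁿ D` satisfies `g E = E \ D`, and `S² = E ⊔ (S² \ E)` is equidecomposable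
with `(E \ D) ⊔ (S² \ E) = S² \ D`.
-/

section Equidecomposition

variable {G X : Type*} [Group G] [MulAction G X]

theorem equidecomposable_union_of_disjoint {P Q : Set X} (g h : G) (hPQ : Disjoint P Q)
    (hgh : Disjoint (g • P) (h • Q)) : Equidecomposable G (P ∪ Q) (g • P ∪ h • Q) := by
  refine ⟨2, ![P, Q], ![g, h], ?_, ?_, ?_, ?_⟩
  · simp [Fin.forall_fin_two, hPQ, hPQ.symm]
  · ext; simp [Fin.exists_fin_two]
  · simp [Fin.forall_fin_two, hgh, hgh.symm]
  · ext; simp [Fin.exists_fin_two]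

theorem equidecomposable_sdiff_of_smul_eq_sdiff {S D E : Set X} (g : G) (hES : E ⊆ S)
    (hgE : g • E = E \ D) (hDE : D ⊆ E) : Equidecomposable G S (S \ D) := by
  have hpieces := equidecomposable_union_of_disjoint g (1 : G) (Set.disjoint_sdiff_right (t := S))
    (by rw [hgE, one_smul]; exact Set.disjoint_sdiff_right.mono_left Set.sdiff_subset)
  have hsplit : g • E ∪ (1 : G) • (S \ E) = S \ D := by
    rw [hgE, one_smul]
    ext x
    have := @hES x
    have := @hDE x
    simp only [Set.mem_union, Set.mem_sdiff]
    tauto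
  rwa [Set.union_sdiff_cancel hES, hsplit] at hpieces

theorem smul_iUnion_pow_smul_eq_sdiff (g : G) {D : Set X}
    (hD : ∀ n : ℕ, Disjoint (g ^ (n + 1) • D) D) :
    g • ⋃ n : ℕ, g ^ n • D = (⋃ n : ℕ, g ^ n • D) \ D := by
  have hshift : g • ⋃ n : ℕ, g ^ n • D = ⋃ n : ℕ, g ^ (n + 1) • D := by
    simp only [Set.smul_set_iUnion, smul_smul, pow_succ']
  have hsplit : ⋃ n : ℕ, g ^ n • D = D ∪ ⋃ n : ℕ, g ^ (n + 1) • D := by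
    rw [← Set.union_iUnion_nat_succ, pow_zero, one_smul]
  rw [hshift, hsplit, Set.union_sdiff_left,
    (Set.disjoint_iUnion_left.mpr hD).sdiff_eq_left]

theorem equidecomposable_sdiff_of_disjoint_pow_smul {S D : Set X} (g : G) (hDS : D ⊆ S)
    (hgS : Set.MapsTo (g • ·) S S) (hD : ∀ n : ℕ, Disjoint (g ^ (n + 1) • D) D) :
    Equidecomposable G S (S \ D) := by
  refine equidecomposable_sdiff_of_smul_eq_sdiff g (E := ⋃ n : ℕ, g ^ n • D) ?_
    (smul_iUnion_pow_smul_eq_sdiff g hD) fun x hx => Set.mem_iUnion.mpr ⟨0, by simpa using hx⟩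
  refine Set.iUnion_subset fun n => ?_
  rw [← Set.image_smul, ← smul_iterate]
  exact (hgS.iterate n).mono_left hDS |>.image_subset

theorem disjoint_conj_pow_smul_iff (u g : G) (n : ℕ) (D : Set X) :
    Disjoint ((u * g * u⁻¹) ^ n • D) D ↔ Disjoint (g ^ n • u⁻¹ • D) (u⁻¹ • D) := by
  rw [conj_pow, ← Set.disjoint_smul_set (a := u⁻¹), smul_smul, smul_smul]
  group

end Equidecomposition

section Rotations

open Complex Matrix

local notation "SO3" => Matrix.specialOrthogonalGroup (Fin 3) ℝ
local notation "ℝ³" => EuclideanSpace ℝ (Fin 3)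

theorem norm_SO3_smul (g : SO3) (x : ℝ³) : ‖g • x‖ = ‖x‖ :=
  ContinuousLinearMap.norm_map_of_mem_unitary
    (Unitary.map_mem (toEuclideanCLM (n := Fin 3) (𝕜 := ℝ))
      (mem_specialOrthogonalGroup_iff.mp g.2).1) x

def xyProj (x : ℝ³) : ℂ := ⟨x 0, x 1⟩

def yzProj (x : ℝ³) : ℂ := ⟨x 1, x 2⟩

theorem yzProj_eq_I_or_neg_I {y : ℝ³} (hy : ‖y‖ = 1) (hxy : xyProj y = 0) :
    yzProj y = I ∨ yzProj y = -I := by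
  have h0 : y 0 = 0 := congrArg re hxy
  have h1 : y 1 = 0 := congrArg im hxy
  have h2 : y 2 ^ 2 = 1 := by
    have := EuclideanSpace.norm_sq_eq y
    simp only [hy, Fin.sum_univ_three, Real.norm_eq_abs, sq_abs, h0, h1] at this
    linarith
  rcases sq_eq_one_iff.mp h2 with h | h
  · exact .inl (Complex.ext (by simp [yzProj, h1]) (by simp [yzProj, h]))
  · exact .inr (Complex.ext (by simp [yzProj, h1]) (by simp [yzProj, h]))

theorem countable_setOf_exp_mul_I_eq (c : ℂ) : {θ : ℝ | exp (θ * I) = c}.Countable := by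
  rcases Set.eq_empty_or_nonempty {θ : ℝ | exp (θ * I) = c} with h | ⟨θ₀, hθ₀⟩
  · simp [h]
  refine (Set.countable_range fun m : ℤ => θ₀ + m * (2 * Real.pi)).mono fun θ hθ => ?_
  have hcircle : Circle.exp θ = Circle.exp θ₀ := by
    ext1
    rw [Circle.coe_exp, Circle.coe_exp, hθ.out, hθ₀.out]
  obtain ⟨m, hm⟩ := Circle.exp_eq_exp.mp hcircle
  exact ⟨m, hm.symm⟩

theorem mem_specialOrthogonalGroup_iff_mul_transpose {n : Type*} [Fintype n] [DecidableEq n]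
    (A : Matrix n n ℝ) : A ∈ specialOrthogonalGroup n ℝ ↔ A * Aᵀ = 1 ∧ A.det = 1 := by
  rw [mem_specialOrthogonalGroup_iff, mem_orthogonalGroup_iff]

noncomputable def rotZ (θ : ℝ) : SO3 :=
  ⟨!![Real.cos θ, -Real.sin θ, 0; Real.sin θ, Real.cos θ, 0; 0, 0, 1], by
    rw [mem_specialOrthogonalGroup_iff_mul_transpose]
    constructor
    · ext i j
      fin_cases i <;> fin_cases j <;> simp [mul_apply, Fin.sum_univ_three] <;> ring_nf <;> simp
    · simp [det_fin_three, ← sq]⟩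

noncomputable def rotX (θ : ℝ) : SO3 :=
  ⟨!![1, 0, 0; 0, Real.cos θ, -Real.sin θ; 0, Real.sin θ, Real.cos θ], by
    rw [mem_specialOrthogonalGroup_iff_mul_transpose]
    constructor
    · ext i j
      fin_cases i <;> fin_cases j <;> simp [mul_apply, Fin.sum_univ_three] <;> ring_nf <;> simp
    · simp [det_fin_three, ← sq]⟩

theorem rotZ_add (α β : ℝ) : rotZ (α + β) = rotZ α * rotZ β := by
  ext i j
  fin_cases i <;> fin_cases j <;>
    simp [rotZ, Real.cos_add, Real.sin_add] <;> ring

theorem rotZ_zero : rotZ 0 = 1 := by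
  ext i j
  fin_cases i <;> fin_cases j <;> simp [rotZ]

theorem rotZ_pow (θ : ℝ) (n : ℕ) : rotZ θ ^ n = rotZ (n * θ) := by
  induction n with
  | zero => simp [rotZ_zero]
  | succ n ih => rw [pow_succ, ih, ← rotZ_add, Nat.cast_succ, add_one_mul]

theorem xyProj_rotZ_smul (θ : ℝ) (x : ℝ³) : xyProj (rotZ θ • x) = exp (θ * I) * xyProj x := by
  apply Complex.ext <;>
    simp [xyProj, rotZ, mulVec, dotProduct, Fin.sum_univ_three, exp_mul_I,
      ← ofReal_cos, ← ofReal_sin] <;> ring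

theorem yzProj_rotX_smul (θ : ℝ) (x : ℝ³) : yzProj (rotX θ • x) = exp (θ * I) * yzProj x := by
  apply Complex.ext <;>
    simp [yzProj, rotX, mulVec, dotProduct, Fin.sum_univ_three, exp_mul_I,
      ← ofReal_cos, ← ofReal_sin] <;> ring

theorem countable_setOf_rotZ_smul_eq {x : ℝ³} (hx : xyProj x ≠ 0) (y : ℝ³) :
    {θ : ℝ | rotZ θ • x = y}.Countable :=
  (countable_setOf_exp_mul_I_eq (xyProj y / xyProj x)).mono fun θ hθ => by
    rw [Set.mem_ofPred_eq, eq_div_iff hx, ← xyProj_rotZ_smul, hθ.out]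

theorem exists_rotZ_disjoint_pow_smul {D : Set ℝ³} (hD : D.Countable)
    (hDaxis : ∀ x ∈ D, xyProj x ≠ 0) :
    ∃ θ : ℝ, ∀ n : ℕ, Disjoint (rotZ θ ^ (n + 1) • D) D := by
  have hbad : (⋃ n : ℕ, ⋃ x ∈ D, ⋃ y ∈ D,
      (fun θ : ℝ => (n + 1 : ℝ) * θ) ⁻¹' {α | rotZ α • x = y}).Countable :=
    Set.countable_iUnion fun n => hD.biUnion fun x hx => hD.biUnion fun y _ =>
      (countable_setOf_rotZ_smul_eq (hDaxis x hx) y).preimage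
        (mul_right_injective₀ (by positivity))
  obtain ⟨θ, hθ⟩ := (hbad.dense_compl ℝ).nonempty
  refine ⟨θ, fun n => Set.disjoint_left.mpr ?_⟩
  rintro _ ⟨x, hx, rfl⟩ hy
  refine hθ (Set.mem_iUnion.mpr ⟨n, Set.mem_biUnion hx (Set.mem_biUnion hy ?_)⟩)
  show rotZ ((n + 1 : ℝ) * θ) • x = rotZ θ ^ (n + 1) • x
  rw [rotZ_pow, Nat.cast_succ]

theorem exists_SO3_xyProj_inv_smul_ne_zero {D : Set ℝ³} (hD : D.Countable)
    (hDS : D ⊆ {x | ‖x‖ = 1}) : ∃ u : SO3, ∀ x ∈ D, xyProj (u⁻¹ • x) ≠ 0 := by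
  have hbad : (⋃ x ∈ D,
      {φ : ℝ | exp (φ * I) = I / yzProj x} ∪ {φ : ℝ | exp (φ * I) = -I / yzProj x}).Countable :=
    hD.biUnion fun x _ => (countable_setOf_exp_mul_I_eq _).union (countable_setOf_exp_mul_I_eq _)
  obtain ⟨φ, hφ⟩ := (hbad.dense_compl ℝ).nonempty
  -- A unit vector `x` lies on the axis `(rotX φ)⁻¹ • ℝe₃` iff `rotX φ • x = ±e₃`,
  -- which forces `exp (φ * I) * yzProj x = ±I`.
  refine ⟨(rotX φ)⁻¹, fun x hx hxy => hφ (Set.mem_biUnion hx ?_)⟩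
  rw [inv_inv] at hxy
  have hnorm : ‖rotX φ • x‖ = 1 := (norm_SO3_smul _ x).trans (hDS hx)
  rcases yzProj_eq_I_or_neg_I hnorm hxy with h | h <;> rw [yzProj_rotX_smul] at h
  · exact .inl (eq_div_of_mul_eq (right_ne_zero_of_mul (h ▸ I_ne_zero)) h)
  · exact .inr (eq_div_of_mul_eq (right_ne_zero_of_mul (h ▸ neg_ne_zero.mpr I_ne_zero)) h)

theorem exists_SO3_disjoint_pow_smul {D : Set ℝ³} (hD : D.Countable)
    (hDS : D ⊆ {x | ‖x‖ = 1}) : ∃ g : SO3, ∀ n : ℕ, Disjoint (g ^ (n + 1) • D) D := by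
  obtain ⟨u, hu⟩ := exists_SO3_xyProj_inv_smul_ne_zero hD hDS
  have hD' : (u⁻¹ • D).Countable := by
    rw [← Set.image_smul]
    exact hD.image _
  obtain ⟨θ, hθ⟩ := exists_rotZ_disjoint_pow_smul hD' (by rintro _ ⟨x, hx, rfl⟩; exact hu x hx)
  exact ⟨u * rotZ θ * u⁻¹, fun n => (disjoint_conj_pow_smul_iff u _ _ D).mpr (hθ n)⟩

end Rotations

/-- If `D` is a countable subset of the unit sphere `S²` in `ℝ³`, then `S²` and `S² \\ D`
are `SO(3)`-equidecomposable. -/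
theorem sphere_equidecomposable_sdiff_countable
    (D : Set (EuclideanSpace ℝ (Fin 3))) (hD : D.Countable)
    (hDS : D ⊆ {x : EuclideanSpace ℝ (Fin 3) | ‖x‖ = 1}) :
    Equidecomposable ↥(Matrix.specialOrthogonalGroup (Fin 3) ℝ)
      {x : EuclideanSpace ℝ (Fin 3) | ‖x‖ = 1}
      ({x : EuclideanSpace ℝ (Fin 3) | ‖x‖ = 1} \ D) := by
  obtain ⟨g, hg⟩ := exists_SO3_disjoint_pow_smul hD hDS
  exact equidecomposable_sdiff_of_disjoint_pow_smul g hDS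
    (fun x hx => (norm_SO3_smul g x).trans hx) hg
end

section
/- (Ping-pong lemma, first formulation) Let a group Γ act on a set X. Suppose a, b ∈ Γ and A⁺, A⁻, B⁺, B⁻ are pairwise disjoint nonempty subsets of X such that a.(A⁺ ∪ B⁻ ∪ B⁺) ⊆ A⁺, a⁻¹.(A⁻ ∪ B⁻ ∪ B⁺) ⊆ A⁻, b.(B⁺ ∪ A⁻ ∪ A⁺) ⊆ B⁺, and b⁻¹.(B⁻ ∪ A⁻ ∪ A⁺) ⊆ B⁻. Then the group homomorphism from the free group on two generators to Γ sending the two generators to a and b respectively is injective; in particular the subgroup ⟨a, b⟩ of Γ is free of rank 2. -/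
/-!
Pass to the free product of two copies of `FreeGroup Unit ≃ ℤ`. Every nonzero power of `a`
sends `B⁺ ∪ B⁻` into `A⁺ ∪ A⁻` (positive powers land in `A⁺`, negative ones in `A⁻`), and
symmetrically for `b`; so Mathlib's ping-pong lemma for free products applies to the two
disjoint nonempty sets `A⁺ ∪ A⁻` and `B⁺ ∪ B⁻`. (`FreeGroup.injective_lift_of_ping_pong` does
not apply directly: it asks for `a • (A⁻)ᶜ ⊆ A⁺`, whereas here nothing is assumed about points
outside the four sets.)
-/

open scoped Pointwise Function

section PingPong

variable {G α : Type*} [Group G] [MulAction G α]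

theorem pow_succ_smul_subset_of_smul_subset {c : G} {S T : Set α} (hTS : T ⊆ S)
    (h : c • S ⊆ T) : ∀ n : ℕ, c ^ (n + 1) • S ⊆ T
  | 0 => by rwa [zero_add, pow_one]
  | n + 1 =>
    calc c ^ (n + 1 + 1) • S = c ^ (n + 1) • c • S := by rw [pow_succ, mul_smul]
      _ ⊆ c ^ (n + 1) • S := Set.smul_set_mono (h.trans hTS)
      _ ⊆ T := pow_succ_smul_subset_of_smul_subset hTS h n

theorem zpow_smul_subset_union {c : G} {P M S : Set α} (hP : c • (P ∪ S) ⊆ P)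
    (hM : c⁻¹ • (M ∪ S) ⊆ M) {n : ℤ} (hn : n ≠ 0) : c ^ n • S ⊆ P ∪ M := by
  rcases n with (_ | k) | k
  · exact absurd rfl hn
  · calc c ^ Int.ofNat (k + 1) • S ⊆ c ^ (k + 1) • (P ∪ S) := by
          rw [Int.ofNat_eq_natCast, zpow_natCast]; exact Set.smul_set_mono Set.subset_union_right
      _ ⊆ P := pow_succ_smul_subset_of_smul_subset Set.subset_union_left hP k
      _ ⊆ P ∪ M := Set.subset_union_left
  · calc c ^ Int.negSucc k • S ⊆ c⁻¹ ^ (k + 1) • (M ∪ S) := by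
          rw [zpow_negSucc, inv_pow]; exact Set.smul_set_mono Set.subset_union_right
      _ ⊆ M := pow_succ_smul_subset_of_smul_subset Set.subset_union_left hM k
      _ ⊆ P ∪ M := Set.subset_union_right

theorem FreeGroup.injective_lift_of_ping_pong_pairs {ι : Type*} [Nontrivial ι] (a : ι → G)
    (P M : ι → Set α) (hne : ∀ i, (P i ∪ M i).Nonempty)
    (hdisj : Pairwise (Disjoint on fun i => P i ∪ M i))
    (hP : Pairwise fun i j => a i • (P i ∪ M j ∪ P j) ⊆ P i)
    (hM : Pairwise fun i j => (a i)⁻¹ • (M i ∪ M j ∪ P j) ⊆ M i) :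
    Function.Injective (FreeGroup.lift a) := by
  have hlift : FreeGroup.lift a =
      (Monoid.CoprodI.lift fun i => FreeGroup.lift fun _ : Unit => a i).comp
        freeGroupEquivCoprodI.toMonoidHom := by
    ext i
    simp
  rw [hlift, MonoidHom.coe_comp]
  refine Function.Injective.comp ?_ freeGroupEquivCoprodI.injective
  have hcard : ∃ _ : ι, 3 ≤ Cardinal.mk (FreeGroup Unit) :=
    ⟨Classical.arbitrary ι, Cardinal.natCast_le_aleph0.trans (Cardinal.aleph0_le_mk _)⟩
  refine Monoid.CoprodI.lift_injective_of_ping_pong _ (Or.inr hcard) _ hne hdisj ?_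
  intro i j hij h hh
  obtain ⟨n, rfl⟩ := FreeGroup.freeGroupUnitEquivInt.symm.surjective h
  have hn : n ≠ 0 := by rintro rfl; exact hh (zpow_zero _)
  simp only [FreeGroup.freeGroupUnitEquivInt, Equiv.coe_fn_symm_mk, map_zpow,
    FreeGroup.lift_apply_of]
  refine zpow_smul_subset_union ?_ ?_ hn
  · rw [← Set.union_assoc, Set.union_right_comm]; exact hP hij
  · rw [← Set.union_assoc, Set.union_right_comm]; exact hM hij

end PingPong

theorem ping_pong_general {Γ X : Type*} [Group Γ] [MulAction Γ X] (a b : Γ)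
    (Ap Am Bp Bm : Set X)
    (hAp : Ap.Nonempty) (hBp : Bp.Nonempty)
    (h2 : Disjoint Ap Bp) (h3 : Disjoint Ap Bm)
    (h4 : Disjoint Am Bp) (h5 : Disjoint Am Bm)
    (ha : a • (Ap ∪ Bm ∪ Bp) ⊆ Ap)
    (ha' : a⁻¹ • (Am ∪ Bm ∪ Bp) ⊆ Am)
    (hb : b • (Bp ∪ Am ∪ Ap) ⊆ Bp)
    (hb' : b⁻¹ • (Bm ∪ Am ∪ Ap) ⊆ Bm) :
    Function.Injective ⇑(FreeGroup.lift ![a, b]) := by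
  have hdisj : Disjoint (Ap ∪ Am) (Bp ∪ Bm) :=
    (h2.union_right h3).union_left (h4.union_right h5)
  refine FreeGroup.injective_lift_of_ping_pong_pairs ![a, b] ![Ap, Bp] ![Am, Bm]
    (Fin.forall_fin_two.2 ⟨hAp.inl, hBp.inl⟩) ?_ ?_ ?_ <;>
  · intro i j hij
    fin_cases i <;> fin_cases j <;> simp [Function.onFun, *, hdisj.symm] at hij ⊢

/-- The ping-pong lemma (first formulation): if `a, b ∈ Γ` and there are pairwise disjoint
nonempty subsets `A⁺, A⁻, B⁺, B⁻` of a `Γ`-set `X` satisfying the ping-pong conditions,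
then the homomorphism from the free group on two generators sending the generators to
`a` and `b` is injective, i.e. `⟨a, b⟩` is free of rank `2`. -/
theorem ping_pong {Γ X : Type*} [Group Γ] [MulAction Γ X] (a b : Γ)
    (Ap Am Bp Bm : Set X)
    (hAp : Ap.Nonempty) (hAm : Am.Nonempty) (hBp : Bp.Nonempty) (hBm : Bm.Nonempty)
    (h1 : Disjoint Ap Am) (h2 : Disjoint Ap Bp) (h3 : Disjoint Ap Bm)
    (h4 : Disjoint Am Bp) (h5 : Disjoint Am Bm) (h6 : Disjoint Bp Bm)
    (ha : a • (Ap ∪ Bm ∪ Bp) ⊆ Ap)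
    (ha' : a⁻¹ • (Am ∪ Bm ∪ Bp) ⊆ Am)
    (hb : b • (Bp ∪ Am ∪ Ap) ⊆ Bp)
    (hb' : b⁻¹ • (Bm ∪ Am ∪ Ap) ⊆ Bm) :
    Function.Injective ⇑(FreeGroup.lift ![a, b]) :=
  ping_pong_general a b Ap Am Bp Bm hAp hBp h2 h3 h4 h5 ha ha' hb hb'
end

section
/- A group Γ is amenable if and only if Γ is not paradoxical with respect to its action on itself by left translations. -/
open scoped Pointwise

/-- A group `Γ` is amenable if it admits a finitely additive, left-invariant probability
measure defined on all of its subsets. -/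
def Amenable (Γ : Type*) [Group Γ] : Prop :=
  ∃ m : Set Γ → ℝ,
    (∀ A : Set Γ, 0 ≤ m A) ∧ (∀ A : Set Γ, m A ≤ 1) ∧
    m (Set.univ : Set Γ) = 1 ∧
    (∀ A B : Set Γ, Disjoint A B → m (A ∪ B) = m A + m B) ∧
    (∀ (γ : Γ) (A : Set Γ), m ((γ * ·) '' A) = m A)

/-!
An invariant mean gives equidecomposable sets equal mass, so a paradoxical decomposition of `X`
would give `X` mass at least `2`. Conversely, suppose `X` is not paradoxical. If some finite
`T ⊆ G` satisfied `2 * #F ≤ #(T • F)` for every finite `F ⊆ X`, Hall's marriage theorem would give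
an injection `X × Bool → X` moving each point by an element of `T`, and the images of its two
halves would be a paradoxical decomposition. Hence every finite `T` has some `F` with
`#(T • F) < 2 * #F`; growing such an `F` by a finite set `S ∋ 1` produces Følner sets, and an
ultrafilter limit of their normalised counting measures is an invariant mean.
-/

open Set Filter Topology Function
open scoped Finset

structure IsMean {X : Type*} (m : Set X → ℝ) : Prop where
  nonneg : ∀ A, 0 ≤ m A
  le_one : ∀ A, m A ≤ 1
  univ_eq : m univ = 1
  union_eq : ∀ A B, Disjoint A B → m (A ∪ B) = m A + m B

structure IsInvariantMean (G : Type*) {X : Type*} [Group G] [MulAction G X] (m : Set X → ℝ) :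
    Prop extends IsMean m where
  smul_eq : ∀ (g : G) A, m (g • A) = m A

def HasFolnerSets (G X : Type*) [Group G] [MulAction G X] [DecidableEq X] : Prop :=
  ∀ (S : Finset G) (ε : ℝ), 0 < ε →
    ∃ F : Finset X, F.Nonempty ∧ ∀ s ∈ S, (#(s • F \ F) : ℝ) ≤ ε * #F

section

variable {G X : Type*} [Group G] [MulAction G X]

namespace IsMean

variable {m : Set X → ℝ}

lemma empty_eq (hm : IsMean m) : m ∅ = 0 := by
  have := hm.union_eq ∅ ∅ (disjoint_empty _)
  rw [union_empty] at this
  linarith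

lemma biUnion_eq_sum (hm : IsMean m) {ι : Type*} (s : Finset ι) {P : ι → Set X}
    (hP : (s : Set ι).PairwiseDisjoint P) : m (⋃ i ∈ s, P i) = ∑ i ∈ s, m (P i) := by
  classical
  induction s using Finset.induction_on with
  | empty => simpa using hm.empty_eq
  | insert a s ha ih =>
    rw [Finset.coe_insert, pairwiseDisjoint_insert_of_notMem (by exact_mod_cast ha)] at hP
    rw [Finset.set_biUnion_insert, Finset.sum_insert ha, ← ih hP.1,
      hm.union_eq _ _ (disjoint_iUnion₂_right.2 fun i (hi : i ∈ s) => hP.2 i hi)]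

lemma iUnion_eq_sum (hm : IsMean m) {ι : Type*} [Fintype ι] {P : ι → Set X}
    (hP : Pairwise (Disjoint on P)) : m (⋃ i, P i) = ∑ i, m (P i) := by
  simpa using hm.biUnion_eq_sum Finset.univ (hP.set_pairwise _)

lemma of_tendsto {ι : Type*} {l : Filter ι} [l.NeBot] {μ : ι → Set X → ℝ}
    (hμ : ∀ i, IsMean (μ i)) (hm : ∀ A, Tendsto (fun i => μ i A) l (𝓝 (m A))) : IsMean m where
  nonneg A := ge_of_tendsto' (hm A) fun i => (hμ i).nonneg A
  le_one A := le_of_tendsto' (hm A) fun i => (hμ i).le_one A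
  univ_eq := tendsto_nhds_unique (hm univ) <| by
    simpa only [(hμ _).univ_eq] using tendsto_const_nhds
  union_eq A B hAB := tendsto_nhds_unique (hm _) <| by
    simpa only [(hμ _).union_eq A B hAB] using (hm A).add (hm B)

end IsMean

lemma Equidecomposable.of_fintype {ι : Type*} [Fintype ι] {A B : Set X} (P : ι → Set X)
    (g : ι → G) (hP : Pairwise (Disjoint on P)) (hA : ⋃ i, P i = A)
    (hgP : Pairwise (Disjoint on fun i => g i • P i)) (hB : ⋃ i, g i • P i = B) :
    Equidecomposable G A B := by
  let e := (Fintype.equivFin ι).symm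
  refine ⟨Fintype.card ι, P ∘ e, g ∘ e, fun i j hij => hP (e.injective.ne hij), ?_,
    fun i j hij => hgP (e.injective.ne hij), ?_⟩
  · rw [← hA]; exact e.surjective.iUnion_comp P
  · rw [← hB]; exact e.surjective.iUnion_comp fun i => g i • P i

namespace IsInvariantMean

variable {m : Set X → ℝ}

lemma eq_of_equidecomposable (hm : IsInvariantMean G m) {A B : Set X}
    (h : Equidecomposable G A B) : m A = m B := by
  obtain ⟨n, P, g, hP, rfl, hgP, rfl⟩ := h
  rw [hm.iUnion_eq_sum hP, hm.iUnion_eq_sum hgP]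
  simp only [hm.smul_eq]

lemma not_paradoxical (hm : IsInvariantMean G m) : ¬ Paradoxical G X := by
  rintro ⟨A, B, hAB, hA, hB⟩
  have h := hm.union_eq A B hAB
  rw [hm.eq_of_equidecomposable hA, hm.eq_of_equidecomposable hB, hm.univ_eq] at h
  linarith [hm.le_one (A ∪ B)]

end IsInvariantMean

lemma exists_injective_of_two_mul_card_le [DecidableEq X] (T : Finset G)
    (hT : ∀ F : Finset X, 2 * #F ≤ #(T • F)) :
    ∃ f : X × Bool → X, Injective f ∧ ∀ p, ∃ t ∈ T, t • p.1 = f p := by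
  let t : X × Bool → Finset X := fun p => T.image (· • p.1)
  suffices hall : ∀ s : Finset (X × Bool), #s ≤ #(s.biUnion t) by
    obtain ⟨f, hf, hft⟩ := (Finset.all_card_le_biUnion_card_iff_exists_injective t).1 hall
    exact ⟨f, hf, fun p => Finset.mem_image.1 (hft p)⟩
  intro s
  have hs : s ⊆ s.image Prod.fst ×ˢ Finset.univ := fun p hp =>
    Finset.mem_product.2 ⟨Finset.mem_image_of_mem _ hp, Finset.mem_univ _⟩
  have hTs : T • s.image Prod.fst ⊆ s.biUnion t := by
    simp only [Finset.subset_iff, Finset.mem_smul, Finset.mem_image, Finset.mem_biUnion, t]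
    rintro _ ⟨u, hu, _, ⟨p, hp, rfl⟩, rfl⟩
    exact ⟨p, hp, u, hu, rfl⟩
  calc #s ≤ 2 * #(s.image Prod.fst) := by simpa [mul_comm] using Finset.card_le_card hs
    _ ≤ #(T • s.image Prod.fst) := hT _
    _ ≤ #(s.biUnion t) := Finset.card_le_card hTs

lemma equidecomposable_range_univ_of_injective (T : Finset G) {f : X → X} (hf : Injective f)
    (hfT : ∀ x, ∃ t ∈ T, t • x = f x) : Equidecomposable G (range f) univ := by
  choose τ hτT hτ using hfT
  let S : T → Set X := fun t => {x | τ x = t}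
  have hfS : ∀ t : T, (t : G) • S t = f '' S t := fun t => by
    rw [← image_smul]
    exact image_congr fun x (hx : τ x = t) => hx ▸ hτ x
  have hS : Pairwise (Disjoint on S) := fun t u htu =>
    disjoint_left.2 fun x (hxt : τ x = t) (hxu : τ x = u) => htu (Subtype.ext (hxt ▸ hxu))
  have hSuniv : ⋃ t, S t = univ := eq_univ_of_forall fun x => mem_iUnion.2 ⟨⟨τ x, hτT x⟩, rfl⟩
  refine Equidecomposable.of_fintype (fun t : T => (t : G) • S t) (fun t : T => (t : G)⁻¹) ?_ ?_
    (by simpa only [inv_smul_smul] using hS) (by simpa only [inv_smul_smul] using hSuniv)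
  · intro t u htu
    simpa only [onFun, hfS] using (hS htu).image hf.injOn (subset_univ _) (subset_univ _)
  · simp only [hfS, ← image_iUnion, hSuniv, image_univ]

lemma paradoxical_of_two_mul_card_le [DecidableEq X] (T : Finset G)
    (hT : ∀ F : Finset X, 2 * #F ≤ #(T • F)) : Paradoxical G X := by
  obtain ⟨f, hf, hfT⟩ := exists_injective_of_two_mul_card_le T hT
  have h (b : Bool) : Equidecomposable G (range fun x => f (x, b)) univ :=
    equidecomposable_range_univ_of_injective T (hf.comp (Prod.mk_left_injective b))
      fun x => hfT (x, b)
  refine ⟨_, _, disjoint_range_iff.2 fun x y hxy => ?_, h false, h true⟩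
  exact Bool.false_ne_true (congrArg Prod.snd (hf hxy))

lemma exists_le_mul_of_lt_pow_mul (a : ℕ → ℝ) {r : ℝ} (hr : 0 ≤ r) {n : ℕ}
    (h : a n < r ^ n * a 0) : ∃ k, a (k + 1) ≤ r * a k := by
  by_contra! hlt
  suffices ∀ k, r ^ k * a 0 ≤ a k from (this n).not_gt h
  intro k
  induction k with
  | zero => simp
  | succ k ih =>
    calc r ^ (k + 1) * a 0 = r * (r ^ k * a 0) := by ring
      _ ≤ r * a k := by gcongr
      _ ≤ a (k + 1) := (hlt k).le

lemma hasFolnerSets_of_forall_card_smul_lt [DecidableEq G] [DecidableEq X]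
    (h : ∀ T : Finset G, ∃ F : Finset X, #(T • F) < 2 * #F) : HasFolnerSets G X := by
  intro S ε hε
  obtain ⟨n, hn⟩ := pow_unbounded_of_one_lt (2 : ℝ) (lt_add_of_pos_right 1 hε)
  let S' := insert 1 S
  obtain ⟨F₀, hF₀⟩ := h (S' ^ n)
  have hF₀ne : F₀.Nonempty := by
    by_contra! rfl
    simp at hF₀
  let F : ℕ → Finset X := fun k => S' ^ k • F₀
  have hF_succ (k : ℕ) (s : G) (hs : s ∈ S') : s • F k ⊆ F (k + 1) := by
    simp only [F, pow_succ', mul_smul]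
    exact Finset.smul_finset_subset_smul hs
  have hF_mono (k : ℕ) : F k ⊆ F (k + 1) := by
    simpa using hF_succ k 1 (Finset.mem_insert_self 1 S)
  -- `F n` is less than twice `F 0` while `(1 + ε) ^ n > 2`, so some step grows by at most `1 + ε`.
  obtain ⟨k, hk⟩ := exists_le_mul_of_lt_pow_mul (fun k => (#(F k) : ℝ)) (by linarith) (n := n) <|
    calc (#(F n) : ℝ) < 2 * #F₀ := by exact_mod_cast hF₀
      _ ≤ (1 + ε) ^ n * #(F 0) := by simp only [F, pow_zero, one_smul]; gcongr
  refine ⟨F k, (Finset.insert_nonempty 1 S).pow.smul hF₀ne, fun s hs => ?_⟩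
  have hcard : #(s • F k \ F k) + #(F k) ≤ #(F (k + 1)) := by
    rw [← Finset.card_sdiff_add_card_eq_card (hF_mono k)]
    gcongr
    exact hF_succ k s (Finset.mem_insert_of_mem hs)
  have : (#(s • F k \ F k) : ℝ) + #(F k) ≤ (1 + ε) * #(F k) :=
    (by exact_mod_cast hcard : _ ≤ (#(F (k + 1)) : ℝ)).trans hk
  linarith

open Classical in
noncomputable def finsetMean (F : Finset X) (A : Set X) : ℝ := #{x ∈ F | x ∈ A} / #F

lemma isMean_finsetMean {F : Finset X} (hF : F.Nonempty) : IsMean (finsetMean F) where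
  nonneg A := by unfold finsetMean; positivity
  le_one A := by
    classical
    unfold finsetMean
    exact div_le_one_of_le₀ (by exact_mod_cast Finset.card_filter_le _ _) (Nat.cast_nonneg _)
  univ_eq := by simp [finsetMean, hF.ne_empty]
  union_eq A B hAB := by
    classical
    simp only [finsetMean, ← add_div, mem_union, Finset.filter_or]
    rw [Finset.card_union_of_disjoint
      (Finset.disjoint_filter.2 fun _ _ hA => disjoint_left.1 hAB hA), Nat.cast_add]

lemma card_filter_le_card_filter_add_card_sdiff [DecidableEq X] (E F : Finset X) (p : X → Prop)
    [DecidablePred p] : #{x ∈ E | p x} ≤ #{x ∈ F | p x} + #(E \ F) :=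
  calc #{x ∈ E | p x} ≤ #({x ∈ F | p x} ∪ (E \ F)) := Finset.card_le_card fun x => by
        simp only [Finset.mem_filter, Finset.mem_union, Finset.mem_sdiff]; tauto
    _ ≤ _ := Finset.card_union_le _ _

lemma abs_card_filter_sub_card_filter_le [DecidableEq X] {E F : Finset X} (h : #E = #F)
    (p : X → Prop) [DecidablePred p] : |(#{x ∈ E | p x} : ℝ) - #{x ∈ F | p x}| ≤ #(E \ F) := by
  have h₁ : (#{x ∈ E | p x} : ℝ) ≤ #{x ∈ F | p x} + #(E \ F) := by
    exact_mod_cast card_filter_le_card_filter_add_card_sdiff E F p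
  have h₂ : (#{x ∈ F | p x} : ℝ) ≤ #{x ∈ E | p x} + #(E \ F) := by
    rw [Finset.card_sdiff_comm h]
    exact_mod_cast card_filter_le_card_filter_add_card_sdiff F E p
  rw [abs_sub_le_iff]
  constructor <;> linarith

lemma abs_finsetMean_smul_sub_le [DecidableEq X] (F : Finset X) (g : G) (A : Set X) :
    |finsetMean F (g • A) - finsetMean F A| ≤ #(g⁻¹ • F \ F) / #F := by
  classical
  have hcard : #{x ∈ F | x ∈ g • A} = #{x ∈ g⁻¹ • F | x ∈ A} :=
    Finset.card_nbij' (g⁻¹ • ·) (g • ·)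
      (fun x hx => by simp_all [mem_smul_set_iff_inv_smul_mem, Finset.mem_inv_smul_finset_iff])
      (fun x hx => by simp_all [mem_smul_set_iff_inv_smul_mem, Finset.mem_inv_smul_finset_iff])
      (fun x _ => by simp) (fun x _ => by simp)
  rw [finsetMean, finsetMean, hcard, ← sub_div, abs_div, Nat.abs_cast]
  gcongr
  exact abs_card_filter_sub_card_filter_le (Finset.card_smul_finset _ _) _

lemma exists_isInvariantMean_of_tendsto {ι : Type*} {l : Filter ι} [l.NeBot]
    {μ : ι → Set X → ℝ} (hμ : ∀ i, IsMean (μ i))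
    (h : ∀ (g : G) A, Tendsto (fun i => μ i (g • A) - μ i A) l (𝓝 0)) :
    ∃ m : Set X → ℝ, IsInvariantMean G m := by
  let U := Ultrafilter.of l
  have hlim (A : Set X) : ∃ x, Tendsto (fun i => μ i A) U (𝓝 x) := by
    obtain ⟨x, -, hx⟩ := isCompact_Icc.ultrafilter_le_nhds' (U.map fun i => μ i A)
      (Ultrafilter.mem_map.2 (univ_mem' fun i => ⟨(hμ i).nonneg A, (hμ i).le_one A⟩))
    exact ⟨x, hx⟩
  choose m hm using hlim
  refine ⟨m, { toIsMean := IsMean.of_tendsto hμ hm, smul_eq := fun g A => ?_ }⟩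
  exact sub_eq_zero.1 <| tendsto_nhds_unique ((hm (g • A)).sub (hm A))
    ((h g A).mono_left (Ultrafilter.of_le l))

lemma HasFolnerSets.exists_isInvariantMean [DecidableEq X] (h : HasFolnerSets G X) :
    ∃ m : Set X → ℝ, IsInvariantMean G m := by
  classical
  choose F hF hFS using fun i : Finset G × ℕ => h i.1 (1 / (i.2 + 1)) (by positivity)
  refine exists_isInvariantMean_of_tendsto (l := atTop) (fun i => isMean_finsetMean (hF i))
    fun g A => ?_
  have hsnd : Tendsto (fun i : Finset G × ℕ => i.2) atTop atTop :=
    tendsto_atTop_atTop_of_monotone monotone_snd fun n => ⟨(∅, n), le_rfl⟩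
  refine squeeze_zero_norm' ?_ (tendsto_one_div_add_atTop_nhds_zero_nat.comp hsnd)
  filter_upwards [eventually_ge_atTop ({g⁻¹}, 0)] with i hi
  rw [Real.norm_eq_abs]
  refine (abs_finsetMean_smul_sub_le _ g A).trans ?_
  rw [div_le_iff₀ (by exact_mod_cast (hF i).card_pos)]
  exact hFS i g⁻¹ (hi.1 (Finset.mem_singleton_self _))

theorem exists_isInvariantMean_iff_not_paradoxical :
    (∃ m : Set X → ℝ, IsInvariantMean G m) ↔ ¬ Paradoxical G X := by
  classical
  refine ⟨fun ⟨m, hm⟩ => hm.not_paradoxical, fun h => ?_⟩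
  by_cases hT : ∃ T : Finset G, ∀ F : Finset X, 2 * #F ≤ #(T • F)
  · obtain ⟨T, hT⟩ := hT
    exact (h (paradoxical_of_two_mul_card_le T hT)).elim
  · push Not at hT
    exact (hasFolnerSets_of_forall_card_smul_lt hT).exists_isInvariantMean

end

lemma amenable_iff_exists_isInvariantMean {Γ : Type*} [Group Γ] :
    Amenable Γ ↔ ∃ m : Set Γ → ℝ, IsInvariantMean Γ m :=
  ⟨fun ⟨m, h₀, h₁, hu, hadd, hinv⟩ => ⟨m, ⟨⟨h₀, h₁, hu, hadd⟩, hinv⟩⟩,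
    fun ⟨m, hm⟩ => ⟨m, hm.nonneg, hm.le_one, hm.univ_eq, hm.union_eq, hm.smul_eq⟩⟩

/-- A group is amenable if and only if it is not paradoxical with respect to its action
on itself by left translations. -/
theorem amenable_iff_not_paradoxical {Γ : Type*} [Group Γ] :
    Amenable Γ ↔ ¬ Paradoxical Γ Γ :=
  amenable_iff_exists_isInvariantMean.trans exists_isInvariantMean_iff_not_paradoxical
end

section
/- A group Γ is amenable if and only if the following fixed point property holds: for every real topological vector space E in which the continuous linear functionals separate points (for all x ≠ y in E there is a continuous linear functional f : E → ℝ with f(x) ≠ f(y)), every nonempty compact convex subset K ⊆ E, and every action of Γ on K such that each γ ∈ Γ acts by a continuous affine map (γ.(t·x + (1−t)·y) = t·(γ.x) + (1−t)·(γ.y) for all x, y ∈ K and t ∈ [0,1]), there exists a point k ∈ K with γ.k = k for every γ ∈ Γ. -/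
universe u

/-!
An invariant finitely additive probability `m` on `Γ` integrates bounded functions, as limits of
integrals of finitely-valued ones. Given the action, take an orbit `δ ↦ δ • x₀` in `K` and look for
its barycentre: a point `k ∈ K` with `g k = ∫ g (δ • x₀) dm(δ)` for every continuous affine `g`
on `K`. For finitely many `g` this is Hahn–Banach in `ℝⁿ`, applied to the compact convex image of
`K` under `(g₁, …, gₙ)`; compactness of `K` then gives one `k` for all `g`. Taking
`g = f ∘ (γ • ·)` for continuous functionals `f`, invariance of `m` gives `f (γ • k) = f k`, so `k`
is fixed. Conversely, `Γ` acts by translation on the compact convex set of finitely additive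
probabilities on `Γ` inside `Set Γ → ℝ`, and a fixed point of this action is an invariant one.
-/

open Set Filter Topology

namespace FinitelyAdditive

variable {α β : Type*}

structure IsProbability (m : Set α → ℝ) : Prop where
  nonneg : ∀ A, 0 ≤ m A
  univ : m univ = 1
  union : ∀ A B, Disjoint A B → m (A ∪ B) = m A + m B

namespace IsProbability

variable {m : Set α → ℝ} (hm : IsProbability m)
include hm

lemma empty : m ∅ = 0 := by
  simpa using hm.union ∅ ∅ (disjoint_empty _)

lemma le_one (A : Set α) : m A ≤ 1 := by
  have := hm.union A Aᶜ disjoint_compl_right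
  rw [union_compl_self, hm.univ] at this
  linarith [hm.nonneg Aᶜ]

lemma map (f : α → β) : IsProbability fun B => m (f ⁻¹' B) :=
  ⟨fun _ => hm.nonneg _, hm.univ, fun _ _ h => hm.union _ _ (h.preimage f)⟩

lemma preimage_finset (H : α → β) (s : Finset β) :
    m (H ⁻¹' s) = ∑ p ∈ s, m (H ⁻¹' {p}) := by
  classical
  induction s using Finset.induction_on with
  | empty => simpa using hm.empty
  | insert p s hp ih =>
    rw [Finset.coe_insert, insert_eq, preimage_union, hm.union _ _
      ((disjoint_singleton_left.2 hp).preimage H), ih, Finset.sum_insert hp]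

end IsProbability

lemma isProbability_indicator (a : α) : IsProbability fun A => A.indicator 1 a :=
  ⟨fun A => indicator_nonneg (fun _ _ => zero_le_one) a, by simp,
    fun A B h => by rw [indicator_union_of_disjoint h]⟩

lemma isClosed_setOf_isProbability : IsClosed {m : Set α → ℝ | IsProbability m} := by
  have : {m : Set α → ℝ | IsProbability m} = (⋂ A, {m | 0 ≤ m A}) ∩ {m | m univ = 1} ∩
      ⋂ (A) (B) (_ : Disjoint A B), {m | m (A ∪ B) = m A + m B} := by
    ext m
    simp only [mem_inter_iff, mem_iInter]
    exact ⟨fun hm => ⟨⟨hm.nonneg, hm.univ⟩, hm.union⟩, fun ⟨⟨h₀, h₁⟩, h₂⟩ => ⟨h₀, h₁, h₂⟩⟩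
  rw [this]
  refine ((isClosed_iInter fun A => isClosed_le continuous_const (continuous_apply A)).inter
    (isClosed_eq (continuous_apply _) continuous_const)).inter
    (isClosed_iInter fun A => isClosed_iInter fun B => isClosed_iInter fun _ => ?_)
  exact isClosed_eq (continuous_apply _) ((continuous_apply A).add (continuous_apply B))

lemma isCompact_setOf_isProbability : IsCompact {m : Set α → ℝ | IsProbability m} :=
  (isCompact_univ_pi fun _ => isCompact_Icc).of_isClosed_subset isClosed_setOf_isProbability
    fun _ hm => mem_univ_pi.2 fun A => ⟨hm.nonneg A, hm.le_one A⟩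

lemma convex_setOf_isProbability : Convex ℝ {m : Set α → ℝ | IsProbability m} :=
  fun μ hμ ν hν a b ha hb hab =>
    ⟨fun A => add_nonneg (mul_nonneg ha (hμ.nonneg A)) (mul_nonneg hb (hν.nonneg A)),
      by simp [hμ.univ, hν.univ, hab],
      fun A B h => by simp [hμ.union A B h, hν.union A B h]; ring⟩

noncomputable def simpleIntegral (m : Set α → ℝ) (h : α → ℝ) : ℝ :=
  ∑ᶠ v, v * m (h ⁻¹' {v})

lemma simpleIntegral_comp_of_preimage_eq {m : Set α → ℝ} {e : α → α}
    (he : ∀ A, m (e ⁻¹' A) = m A) (h : α → ℝ) :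
    simpleIntegral m (h ∘ e) = simpleIntegral m h := by
  simp only [simpleIntegral, preimage_comp, he]

noncomputable def floorApprox (h : α → ℝ) (n : ℕ) (a : α) : ℝ :=
  ⌊h a * (n + 1)⌋ / (n + 1)

lemma floorApprox_le (h : α → ℝ) (n : ℕ) (a : α) : floorApprox h n a ≤ h a := by
  rw [floorApprox, div_le_iff₀ (by positivity)]
  exact Int.floor_le _

lemma abs_floorApprox_sub_le (h : α → ℝ) (n : ℕ) (a : α) :
    |floorApprox h n a - h a| ≤ 1 / (n + 1) := by
  have hlt : h a * (n + 1) - 1 < ⌊h a * (n + 1)⌋ := Int.sub_one_lt_floor _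
  rw [abs_sub_comm, abs_of_nonneg (sub_nonneg.2 (floorApprox_le h n a)), floorApprox,
    sub_le_iff_le_add, ← add_div, le_div_iff₀ (by positivity)]
  linarith

lemma finite_range_floorApprox {h : α → ℝ} (hb : Bornology.IsBounded (range h)) (n : ℕ) :
    (range (floorApprox h n)).Finite := by
  obtain ⟨C, hC⟩ := isBounded_iff_forall_norm_le.1 hb
  refine ((Finset.Icc ⌊-C * (n + 1)⌋ ⌊C * (n + 1)⌋).finite_toSet.image
    fun z : ℤ => (z : ℝ) / (n + 1)).subset (range_subset_iff.2 fun a => ⟨_, ?_, rfl⟩)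
  have hC' := abs_le.1 (hC _ (mem_range_self a))
  simp only [Finset.coe_Icc, mem_Icc]
  constructor <;> apply Int.floor_mono <;> nlinarith

-- Meaningful for bounded `h` only: the approximants of an unbounded `h` are not finitely-valued.
noncomputable def integral (m : Set α → ℝ) (h : α → ℝ) : ℝ :=
  limUnder atTop fun n => simpleIntegral m (floorApprox h n)

lemma integral_comp_of_preimage_eq {m : Set α → ℝ} {e : α → α}
    (he : ∀ A, m (e ⁻¹' A) = m A) (h : α → ℝ) :
    integral m (h ∘ e) = integral m h :=
  congrArg (limUnder atTop) <| funext fun n =>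
    simpleIntegral_comp_of_preimage_eq he (floorApprox h n)

namespace IsProbability

variable {m : Set α → ℝ} (hm : IsProbability m)
include hm

lemma simpleIntegral_comp_eq_sum {H : α → β} {T : Finset β} (hT : range H ⊆ T) (φ : β → ℝ) :
    simpleIntegral m (φ ∘ H) = ∑ p ∈ T, φ p * m (H ⁻¹' {p}) := by
  classical
  have hfiber : ∀ v, (φ ∘ H) ⁻¹' {v} = H ⁻¹' ↑(T.filter (φ · = v)) := fun v => by
    ext a
    simpa using fun _ => hT (mem_range_self a)
  rw [simpleIntegral, finsum_eq_sum_of_support_subset _ (s := T.image φ) fun v hv => ?_]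
  · simp_rw [hfiber, hm.preimage_finset, Finset.mul_sum]
    rw [← Finset.sum_fiberwise_of_maps_to fun p hp => Finset.mem_image_of_mem φ hp]
    refine Finset.sum_congr rfl fun v _ => Finset.sum_congr rfl fun p hp => ?_
    rw [(Finset.mem_filter.1 hp).2]
  · obtain ⟨a, rfl⟩ : ((φ ∘ H) ⁻¹' {v}).Nonempty := by
      by_contra hempty
      rw [not_nonempty_iff_eq_empty] at hempty
      simp [hempty, hm.empty] at hv
    exact Finset.mem_image_of_mem φ (hT (mem_range_self a))

lemma simpleIntegral_const (c : ℝ) : simpleIntegral m (fun _ => c) = c := by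
  rw [simpleIntegral, finsum_eq_single _ c fun v hv => by simp [Ne.symm hv, hm.empty]]
  simp [hm.univ]

lemma simpleIntegral_le_add {f g : α → ℝ} (hf : (range f).Finite) (hg : (range g).Finite)
    {ε : ℝ} (hfg : ∀ a, f a ≤ g a + ε) : simpleIntegral m f ≤ simpleIntegral m g + ε := by
  set H : α → ℝ × ℝ := fun a => (f a, g a)
  have hH : (range H).Finite :=
    (hf.prod hg).subset (range_subset_iff.2 fun a => ⟨mem_range_self a, mem_range_self a⟩)
  have hT : range H ⊆ hH.toFinset := by simp
  have hpart : ∑ p ∈ hH.toFinset, m (H ⁻¹' {p}) = 1 := by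
    rw [← hm.preimage_finset, Finite.coe_toFinset, preimage_range, hm.univ]
  rw [show f = Prod.fst ∘ H from rfl, show g = Prod.snd ∘ H from rfl,
    hm.simpleIntegral_comp_eq_sum hT, hm.simpleIntegral_comp_eq_sum hT, ← mul_one ε, ← hpart,
    Finset.mul_sum, ← Finset.sum_add_distrib]
  refine Finset.sum_le_sum fun p hp => ?_
  obtain ⟨a, rfl⟩ := hH.mem_toFinset.1 hp
  rw [← add_mul]
  exact mul_le_mul_of_nonneg_right (hfg a) (hm.nonneg _)

lemma abs_simpleIntegral_sub_le {f g : α → ℝ} (hf : (range f).Finite) (hg : (range g).Finite)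
    {ε : ℝ} (hfg : ∀ a, |f a - g a| ≤ ε) :
    |simpleIntegral m f - simpleIntegral m g| ≤ ε := by
  rw [abs_sub_le_iff]
  constructor
  · linarith [hm.simpleIntegral_le_add hf hg fun a => by linarith [(abs_sub_le_iff.1 (hfg a)).1]]
  · linarith [hm.simpleIntegral_le_add hg hf fun a => by linarith [(abs_sub_le_iff.1 (hfg a)).2]]

lemma simpleIntegral_comp_linearMap {ι : Type*} [Fintype ι] {w : α → ι → ℝ}
    (hw : (range w).Finite) (f : (ι → ℝ) →ₗ[ℝ] ℝ) :
    simpleIntegral m (f ∘ w) = f fun i => simpleIntegral m fun a => w a i := by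
  have hT : range w ⊆ hw.toFinset := by simp
  have hcoord : (fun i => simpleIntegral m fun a => w a i) =
      ∑ p ∈ hw.toFinset, m (w ⁻¹' {p}) • p := by
    funext i
    rw [Finset.sum_apply, ← Function.comp_def (fun p : ι → ℝ => p i),
      hm.simpleIntegral_comp_eq_sum hT]
    simp [mul_comm]
  rw [hm.simpleIntegral_comp_eq_sum hT, hcoord, map_sum]
  simp [mul_comm]


lemma tendsto_simpleIntegral_floorApprox {h : α → ℝ} (hb : Bornology.IsBounded (range h)) :
    Tendsto (fun n => simpleIntegral m (floorApprox h n)) atTop (𝓝 (integral m h)) := by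
  refine tendsto_nhds_limUnder (cauchySeq_tendsto_of_complete ?_)
  refine cauchySeq_of_le_tendsto_0' (fun n : ℕ => 2 * (1 / ((n : ℝ) + 1))) (fun n k hnk => ?_)
    (by simpa only [mul_zero] using tendsto_one_div_add_atTop_nhds_zero_nat.const_mul (2 : ℝ))
  rw [Real.dist_eq]
  refine hm.abs_simpleIntegral_sub_le (finite_range_floorApprox hb n)
    (finite_range_floorApprox hb k) fun a => ?_
  have hkn : 1 / ((k : ℝ) + 1) ≤ 1 / ((n : ℝ) + 1) := by gcongr
  calc |floorApprox h n a - floorApprox h k a|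
      ≤ |floorApprox h n a - h a| + |h a - floorApprox h k a| := abs_sub_le _ _ _
    _ ≤ 1 / ((n : ℝ) + 1) + 1 / ((k : ℝ) + 1) := by
      rw [abs_sub_comm (h a)]
      exact add_le_add (abs_floorApprox_sub_le h n a) (abs_floorApprox_sub_le h k a)
    _ ≤ 2 * (1 / ((n : ℝ) + 1)) := by linarith

lemma tendsto_simpleIntegral_of_approx {h : α → ℝ} (hb : Bornology.IsBounded (range h))
    {s : ℕ → α → ℝ} (hs : ∀ n, (range (s n)).Finite) {ε : ℕ → ℝ}
    (hε : Tendsto ε atTop (𝓝 0)) (hsε : ∀ n a, |s n a - h a| ≤ ε n) :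
    Tendsto (fun n => simpleIntegral m (s n)) atTop (𝓝 (integral m h)) := by
  have hdiff : Tendsto (fun n => simpleIntegral m (s n) - simpleIntegral m (floorApprox h n))
      atTop (𝓝 0) := by
    refine squeeze_zero_norm (fun n => hm.abs_simpleIntegral_sub_le (hs n)
      (finite_range_floorApprox hb n) fun a => ?_)
      (by simpa only [add_zero] using hε.add tendsto_one_div_add_atTop_nhds_zero_nat)
    calc |s n a - floorApprox h n a| ≤ |s n a - h a| + |h a - floorApprox h n a| :=
          abs_sub_le _ _ _
      _ ≤ ε n + 1 / ((n : ℝ) + 1) := by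
        rw [abs_sub_comm (h a)]
        exact add_le_add (hsε n a) (abs_floorApprox_sub_le h n a)
  simpa using hdiff.add (hm.tendsto_simpleIntegral_floorApprox hb)

lemma integral_le_of_forall_le {h : α → ℝ} (hb : Bornology.IsBounded (range h)) {c : ℝ}
    (hc : ∀ a, h a ≤ c) : integral m h ≤ c := by
  refine le_of_tendsto' (hm.tendsto_simpleIntegral_floorApprox hb) fun n => ?_
  have := hm.simpleIntegral_le_add (finite_range_floorApprox hb n) (finite_range_const (c := c))
    (ε := 0) fun a => by simpa using (floorApprox_le h n a).trans (hc a)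
  simpa [hm.simpleIntegral_const] using this

lemma integral_comp_continuousLinearMap {ι : Type*} [Fintype ι] {v : α → ι → ℝ}
    (hv : Bornology.IsBounded (range v)) (f : (ι → ℝ) →L[ℝ] ℝ) :
    integral m (f ∘ v) = f fun i => integral m fun a => v a i := by
  have hcoord : ∀ i, Bornology.IsBounded (range fun a => v a i) := fun i => by
    have := (LipschitzWith.eval (α := fun _ : ι => ℝ) i).isBounded_image hv
    rwa [← range_comp] at this
  let s : ℕ → α → ι → ℝ := fun n a i => floorApprox (fun a => v a i) n a
  have hs : ∀ n, (range (s n)).Finite := fun n =>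
    (Finite.pi fun i => finite_range_floorApprox (hcoord i) n).subset
      (range_subset_iff.2 fun a => mem_univ_pi.2 fun i => mem_range_self a)
  have hsv : ∀ n a, |f (s n a) - f (v a)| ≤ ‖f‖ * (1 / ((n : ℝ) + 1)) := fun n a => by
    rw [← map_sub, ← Real.norm_eq_abs]
    refine f.le_opNorm_of_le ((pi_norm_le_iff_of_nonneg (by positivity)).2 fun i => ?_)
    exact abs_floorApprox_sub_le (fun a => v a i) n a
  have hlim : Tendsto (fun n => simpleIntegral m (f ∘ s n)) atTop (𝓝 (integral m (f ∘ v))) :=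
    hm.tendsto_simpleIntegral_of_approx (by rw [range_comp]; exact f.lipschitz.isBounded_image hv)
      (fun n => by rw [range_comp]; exact (hs n).image f)
      (by simpa only [mul_zero] using tendsto_one_div_add_atTop_nhds_zero_nat.const_mul ‖f‖) hsv
  refine tendsto_nhds_unique hlim ?_
  simp_rw [show ∀ n, ⇑f ∘ s n = ⇑(f : (ι → ℝ) →ₗ[ℝ] ℝ) ∘ s n from fun _ => rfl,
    hm.simpleIntegral_comp_linearMap (hs _)]
  exact (f.continuous.tendsto _).comp
    (tendsto_pi_nhds.2 fun i => hm.tendsto_simpleIntegral_floorApprox (hcoord i))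

end IsProbability

end FinitelyAdditive

section AffineOn

variable {E F : Type*} [AddCommGroup E] [Module ℝ E] [AddCommGroup F] [Module ℝ F]

def IsAffineOn (K : Set E) (g : E → F) : Prop :=
  ∀ x ∈ K, ∀ y ∈ K, ∀ t ∈ Icc (0 : ℝ) 1, g (t • x + (1 - t) • y) = t • g x + (1 - t) • g y

lemma IsAffineOn.convex_image {K : Set E} {g : E → F} (hg : IsAffineOn K g) (hK : Convex ℝ K) :
    Convex ℝ (g '' K) := by
  rintro _ ⟨x, hx, rfl⟩ _ ⟨y, hy, rfl⟩ a b ha hb hab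
  obtain rfl : b = 1 - a := by linarith
  exact ⟨a • x + (1 - a) • y, hK hx hy ha hb hab, hg x hx y hy a ⟨ha, by linarith⟩⟩

lemma IsAffineOn.linearMap_comp {K : Set E} {g : E → F} (hg : IsAffineOn K g) {G : Type*}
    [AddCommGroup G] [Module ℝ G] (f : F →ₗ[ℝ] G) : IsAffineOn K (f ∘ g) :=
  fun x hx y hy t ht => by simp [hg x hx y hy t ht]

lemma isAffineOn_pi {ι : Type*} {K : Set E} {g : ι → E → ℝ} (hg : ∀ i, IsAffineOn K (g i)) :
    IsAffineOn K fun x i => g i x :=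
  fun x hx y hy t ht => funext fun i => hg i x hx y hy t ht

end AffineOn

namespace FinitelyAdditive.IsProbability

variable {α E : Type*} [AddCommGroup E] [Module ℝ E] [TopologicalSpace E]
  {m : Set α → ℝ} (hm : IsProbability m)
include hm

theorem exists_mem_eq_integral_of_fintype {ι : Type*} [Fintype ι] {K : Set E} (hKc : IsCompact K)
    (hKcv : Convex ℝ K) {F : E → ι → ℝ} (hFc : ContinuousOn F K) (hFa : IsAffineOn K F)
    {o : α → E} (ho : ∀ a, o a ∈ K) :
    ∃ x ∈ K, F x = fun i => integral m fun a => F (o a) i := by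
  have hSc : IsCompact (F '' K) := hKc.image_of_continuousOn hFc
  have hSo : range (F ∘ o) ⊆ F '' K := range_subset_iff.2 fun a => mem_image_of_mem F (ho a)
  by_contra! hp
  obtain ⟨f, u, hfS, hfu⟩ := geometric_hahn_banach_closed_point (hFa.convex_image hKcv)
    hSc.isClosed fun ⟨x, hxK, hx⟩ => hp x hxK hx
  have hb : Bornology.IsBounded (range (F ∘ o)) := hSc.isBounded.subset hSo
  refine (hm.integral_le_of_forall_le ?_ fun a => (hfS _ (hSo (mem_range_self a))).le).not_gt
    (hfu.trans_eq (hm.integral_comp_continuousLinearMap hb f).symm)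
  exact (f.lipschitz.isBounded_image hb).subset
    (range_subset_iff.2 fun a => mem_image_of_mem f (mem_range_self a))

theorem exists_mem_forall_eq_integral [T2Space E] {ι : Type*} {K : Set E} (hKc : IsCompact K)
    (hKcv : Convex ℝ K) {G : ι → E → ℝ} (hGc : ∀ i, ContinuousOn (G i) K)
    (hGa : ∀ i, IsAffineOn K (G i)) {o : α → E} (ho : ∀ a, o a ∈ K) :
    ∃ x ∈ K, ∀ i, G i x = integral m fun a => G i (o a) := by
  have hclosed : ∀ i, IsClosed (K ∩ G i ⁻¹' {integral m fun a => G i (o a)}) := fun i =>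
    (hGc i).preimage_isClosed_of_isClosed hKc.isClosed isClosed_singleton
  obtain ⟨x, hxK, hx⟩ := hKc.inter_iInter_nonempty _ hclosed fun u => by
    obtain ⟨x, hxK, hx⟩ := hm.exists_mem_eq_integral_of_fintype hKc hKcv
      (continuousOn_pi.2 fun i : u => hGc i) (isAffineOn_pi fun i : u => hGa i) ho
    exact ⟨x, hxK, mem_iInter₂.2 fun i hi => ⟨hxK, congrFun hx ⟨i, hi⟩⟩⟩
  exact ⟨x, hxK, fun i => (mem_iInter.1 hx i).2⟩

end FinitelyAdditive.IsProbability

open FinitelyAdditive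

theorem exists_fixed_point_of_isProbability_invariant {Γ E : Type*} [Group Γ] [AddCommGroup E]
    [Module ℝ E] [TopologicalSpace E] {m : Set Γ → ℝ} (hm : IsProbability m)
    (hinv : ∀ γ A, m ((γ * ·) ⁻¹' A) = m A) (sep : ∀ x y : E, x ≠ y → ∃ f : E →L[ℝ] ℝ, f x ≠ f y)
    {K : Set E} (hKne : K.Nonempty) (hKc : IsCompact K) (hKcv : Convex ℝ K) {act : Γ → E → E}
    (hmaps : ∀ γ, ∀ x ∈ K, act γ x ∈ K) (hone : ∀ x ∈ K, act 1 x = x)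
    (hmul : ∀ γ δ, ∀ x ∈ K, act (γ * δ) x = act γ (act δ x))
    (hcont : ∀ γ, ContinuousOn (act γ) K) (haff : ∀ γ, IsAffineOn K (act γ)) :
    ∃ k ∈ K, ∀ γ, act γ k = k := by
  have : T2Space E := ⟨fun x y hxy =>
    let ⟨f, hf⟩ := sep x y hxy; separated_by_continuous f.continuous hf⟩
  obtain ⟨x₀, hx₀⟩ := hKne
  obtain ⟨k, hkK, hk⟩ := hm.exists_mem_forall_eq_integral hKc hKcv
    (G := fun (p : Γ × (E →L[ℝ] ℝ)) x => p.2 (act p.1 x))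
    (fun p => p.2.continuous.comp_continuousOn (hcont p.1))
    (fun p => (haff p.1).linearMap_comp (p.2 : E →ₗ[ℝ] ℝ)) (fun δ => hmaps δ x₀ hx₀)
  refine ⟨k, hkK, fun γ => not_not.1 fun hne => ?_⟩
  obtain ⟨f, hf⟩ := sep _ _ hne
  have horbit : (fun δ => f (act γ (act δ x₀))) = (fun δ => f (act 1 (act δ x₀))) ∘ (γ * ·) :=
    funext fun δ => by simp [← hmul γ δ x₀ hx₀, hone _ (hmaps _ x₀ hx₀)]
  apply hf
  calc f (act γ k) = integral m fun δ => f (act γ (act δ x₀)) := hk (γ, f)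
    _ = integral m fun δ => f (act 1 (act δ x₀)) := by
      rw [horbit, integral_comp_of_preimage_eq (hinv γ)]
    _ = f k := by rw [← hk (1, f), hone k hkK]

/-- A group is amenable if and only if every action of it by continuous affine maps on a
nonempty compact convex subset of a real topological vector space whose continuous linear
functionals separate points admits a global fixed point. -/
theorem amenable_iff_fixed_point_property (Γ : Type u) [Group Γ] :
    Amenable Γ ↔
      ∀ (E : Type u) [AddCommGroup E] [Module ℝ E] [TopologicalSpace E]
        [IsTopologicalAddGroup E] [ContinuousSMul ℝ E],
        (∀ x y : E, x ≠ y → ∃ f : E →L[ℝ] ℝ, f x ≠ f y) →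
        ∀ K : Set E, K.Nonempty → IsCompact K → Convex ℝ K →
          ∀ act : Γ → E → E,
            (∀ (γ : Γ), ∀ x ∈ K, act γ x ∈ K) →
            (∀ x ∈ K, act 1 x = x) →
            (∀ γ δ : Γ, ∀ x ∈ K, act (γ * δ) x = act γ (act δ x)) →
            (∀ γ : Γ, ContinuousOn (act γ) K) →
            (∀ γ : Γ, ∀ x ∈ K, ∀ y ∈ K, ∀ t : ℝ, t ∈ Set.Icc (0 : ℝ) 1 →
              act γ (t • x + (1 - t) • y) = t • act γ x + (1 - t) • act γ y) →
            ∃ k ∈ K, ∀ γ : Γ, act γ k = k := by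
  constructor
  · rintro ⟨m, hpos, -, huniv, hadd, hinv⟩ E _ _ _ _ _ sep K hKne hKc hKcv act hmaps hone hmul
      hcont haff
    refine exists_fixed_point_of_isProbability_invariant ⟨hpos, huniv, hadd⟩ (fun γ A => ?_) sep
      hKne hKc hKcv hmaps hone hmul hcont haff
    rw [← hinv γ⁻¹ A, image_mul_left, inv_inv]
  · intro H
    obtain ⟨m, hm, hfix⟩ := H (Set Γ → ℝ)
      (fun x y hxy => let ⟨A, hA⟩ := Function.ne_iff.1 hxy; ⟨ContinuousLinearMap.proj A, hA⟩)
      {m | IsProbability m} ⟨_, isProbability_indicator 1⟩ isCompact_setOf_isProbability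
      convex_setOf_isProbability (fun γ m A => m ((γ * ·) ⁻¹' A)) (fun _ _ hm => hm.map _)
      (fun _ _ => by simp) (fun γ δ _ _ => by simp [preimage_preimage, mul_assoc])
      (fun _ => (continuous_pi fun _ => continuous_apply _).continuousOn)
      (fun _ _ _ _ _ _ _ => rfl)
    exact ⟨m, hm.nonneg, hm.le_one, hm.univ, hm.union,
      fun γ A => by rw [image_mul_left]; exact congrFun (hfix γ⁻¹) A⟩
end

section
/- Let Γ be a group generated by a finite symmetric set Σ containing the identity (Σ = Σ⁻¹, 1 ∈ Σ). If Γ has subexponential growth with respect to Σ, i.e. for every c > 1 there is N ∈ ℕ such that |Σⁿ| < cⁿ for all n ≥ N, then for every ε > 0 there exists n ∈ ℕ with |Σ^{n+1} \ Σⁿ| < ε·|Σⁿ|. (In particular, a subsequence of the balls Σⁿ forms a Følner sequence, so Γ is amenable.) -/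
open scoped Pointwise
/-- If a group `Γ` is generated by a finite symmetric set `S` containing the identity and
has subexponential growth with respect to `S`, then for every `ε > 0` some ball `Sⁿ`
satisfies the Følner condition `|S^{n+1} \ Sⁿ| < ε * |Sⁿ|`. -/
theorem folner_ball_of_subexponential_growth {Γ : Type*} [Group Γ] [DecidableEq Γ]
    (S : Finset Γ) (hsym : ∀ s ∈ S, s⁻¹ ∈ S) (hone : (1 : Γ) ∈ S)
    (hgen : Subgroup.closure (S : Set Γ) = ⊤)
    (hsubexp : ∀ c : ℝ, 1 < c → ∃ N : ℕ, ∀ n ≥ N, ((S ^ n).card : ℝ) < c ^ n) :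
    ∀ ε : ℝ, 0 < ε → ∃ n : ℕ, (((S ^ (n + 1) \ S ^ n).card : ℝ)) < ε * (S ^ n).card := by
  intro ε hε
  by_contra h
  push_neg at h
  have hsub : ∀ n : ℕ, S ^ n ⊆ S ^ (n + 1) := by
    intro n x hx
    rw [pow_succ]
    simpa using Finset.mul_mem_mul hx hone
  have hcard : ∀ n : ℕ, (1 + ε) ^ n ≤ ((S ^ n).card : ℝ) := by
    intro n
    induction n with
    | zero => simp
    | succ n ih =>
      have hdiff := h n
      have heq : ((S ^ (n + 1) \ S ^ n).card : ℝ) + ((S ^ n).card : ℝ)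
          = ((S ^ (n + 1)).card : ℝ) := by
        rw [← Nat.cast_add, Finset.card_sdiff_add_card_eq_card (hsub n)]
      have hpos : (0 : ℝ) ≤ (1 + ε) ^ n := by positivity
      calc (1 + ε) ^ (n + 1) = (1 + ε) ^ n + ε * (1 + ε) ^ n := by ring
        _ ≤ ((S ^ n).card : ℝ) + ε * ((S ^ n).card : ℝ) := by
            have := mul_le_mul_of_nonneg_left ih (le_of_lt hε)
            linarith
        _ ≤ ((S ^ (n + 1)).card : ℝ) := by linarith
  obtain ⟨N, hN⟩ := hsubexp (1 + ε) (by linarith)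
  exact absurd (hcard N) (not_le.mpr (hN N le_rfl))
end

section
/- Let Γ be a (discrete) group with property (T): every unitary representation of Γ on a complex Hilbert space that has almost invariant vectors admits a nonzero invariant vector. Then Γ is finitely generated. -/
/-! `Γ` acts on the disjoint union `X` of the coset spaces `Γ ⧸ Δ`, `Δ` running over the finitely
generated subgroups. A finite set `K ⊆ Γ` fixes the base point of `Γ ⧸ ⟨K⟩`, so the Dirac vector
there is `K`-invariant in `ℓ²(X)`: the permutation representation has almost invariant vectors.
Property (T) yields a nonzero invariant vector; it is square summable and constant on orbits, so
some orbit `Γ ⧸ Δ` is finite, and then the generators of `Δ` together with a transversal generate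
`Γ`. -/

universe u

open scoped ENNReal

theorem Memℓp.comp_equiv {α β E : Type*} [NormedAddCommGroup E] {p : ℝ≥0∞} {f : α → E}
    (hf : Memℓp f p) (e : β ≃ α) : Memℓp (f ∘ e) p := by
  rcases p.trichotomy with rfl | rfl | hp
  · exact memℓp_zero (hf.finite_dsupport.preimage e.injective.injOn)
  · exact memℓp_infty (hf.bddAbove.mono (Set.range_comp_subset_range e fun i => ‖f i‖))
  · exact memℓp_gen ((e.summable_iff (f := fun i => ‖f i‖ ^ p.toReal)).2 (hf.summable hp))

theorem Memℓp.finite_setOf_le_norm {α E : Type*} [NormedAddCommGroup E] {p : ℝ≥0∞}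
    (hp : 0 < p.toReal) {f : α → E} (hf : Memℓp f p) {c : ℝ} (hc : 0 < c) :
    {i | c ≤ ‖f i‖}.Finite := by
  have hsmall : ∀ᶠ i in Filter.cofinite, ‖f i‖ ^ p.toReal < c ^ p.toReal :=
    (hf.summable hp).tendsto_cofinite_zero.eventually (gt_mem_nhds (Real.rpow_pos_of_pos hc _))
  refine (Filter.eventually_cofinite.1 hsmall).subset fun i hi => ?_
  exact not_lt.2 (Real.rpow_le_rpow hc.le hi hp.le)

namespace lp

variable {𝕜 E α β : Type*} [NormedRing 𝕜] [NormedAddCommGroup E] [Module 𝕜 E]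
  [IsBoundedSMul 𝕜 E] {p : ℝ≥0∞} [Fact (1 ≤ p)] {G : Type*} [Group G] [MulAction G α]

theorem norm_comp_equiv (f : lp (fun _ : α => E) p) (e : β ≃ α) :
    ‖(⟨f ∘ e, (lp.memℓp f).comp_equiv e⟩ : lp (fun _ : β => E) p)‖ = ‖f‖ := by
  rcases p.trichotomy with rfl | rfl | hp
  · exact absurd (Fact.out : (1 : ℝ≥0∞) ≤ 0) (by norm_num)
  · simp only [lp.norm_eq_ciSup]
    exact e.iSup_comp (g := fun i => ‖f i‖)
  · rw [lp.norm_eq_tsum_rpow hp, lp.norm_eq_tsum_rpow hp]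
    congr 1
    exact e.tsum_eq (fun i => ‖f i‖ ^ p.toReal)

variable (𝕜 E p) in
def compEquiv (e : β ≃ α) : lp (fun _ : α => E) p ≃ₗᵢ[𝕜] lp (fun _ : β => E) p where
  toFun f := ⟨f ∘ e, (lp.memℓp f).comp_equiv e⟩
  invFun f := ⟨f ∘ e.symm, (lp.memℓp f).comp_equiv e.symm⟩
  map_add' _ _ := rfl
  map_smul' _ _ := rfl
  left_inv f := by ext i; simp
  right_inv f := by ext i; simp
  norm_map' f := norm_comp_equiv f e

@[simp] theorem compEquiv_apply (e : β ≃ α) (f : lp (fun _ : α => E) p) (i : β) :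
    compEquiv 𝕜 E p e f i = f (e i) := rfl

variable (𝕜 E α p G) in
def permRep : G →* (lp (fun _ : α => E) p ≃ₗᵢ[𝕜] lp (fun _ : α => E) p) where
  toFun g := compEquiv 𝕜 E p (MulAction.toPerm g⁻¹)
  map_one' := by ext f i; simp
  map_mul' g h := by ext f i; simp [mul_smul]

@[simp] theorem permRep_apply (g : G) (f : lp (fun _ : α => E) p) (i : α) :
    permRep 𝕜 E α p G g f i = f (g⁻¹ • i) := rfl

theorem permRep_single [DecidableEq α] (g : G) (i : α) (a : E) :
    permRep 𝕜 E α p G g (lp.single p i a) = lp.single p (g • i) a := by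
  ext j
  simp [Pi.single_apply, inv_smul_eq_iff]

theorem exists_almost_invariant_of_exists_fixed [Nontrivial E]
    (hfix : ∀ K : Finset G, ∃ i : α, ∀ k ∈ K, k • i = i) (K : Finset G) (ε : ℝ) (hε : 0 < ε) :
    ∃ v : lp (fun _ : α => E) p, v ≠ 0 ∧ ∀ k ∈ K, ‖permRep 𝕜 E α p G k v - v‖ < ε * ‖v‖ := by
  classical
  obtain ⟨i, hi⟩ := hfix K
  obtain ⟨a, ha⟩ := exists_ne (0 : E)
  have hv : lp.single p i a ≠ 0 := fun h => ha (by simpa using congr(($h : α → E) i))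
  refine ⟨lp.single p i a, hv, fun k hk => ?_⟩
  rw [permRep_single, hi k hk, sub_self, norm_zero]
  exact mul_pos hε (norm_pos_iff.2 hv)

theorem finite_orbit_of_forall_permRep_eq (hp : 0 < p.toReal) {f : lp (fun _ : α => E) p}
    (hf : ∀ g : G, permRep 𝕜 E α p G g f = f) {i : α} (hi : f i ≠ 0) :
    (MulAction.orbit G i).Finite := by
  refine ((lp.memℓp f).finite_setOf_le_norm hp (norm_pos_iff.2 hi)).subset ?_
  rintro _ ⟨g, rfl⟩
  have hfg := congr(($(hf g⁻¹) : α → E) i)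
  rw [permRep_apply, inv_inv] at hfg
  exact (congrArg norm hfg).ge

end lp

theorem MulAction.finite_orbit_of_finite_orbit_sigma_mk {M ι : Type*} {α : ι → Type*} [Monoid M]
    [∀ i, MulAction M (α i)] {i : ι} {x : α i}
    (h : (MulAction.orbit M (⟨i, x⟩ : Σ i, α i)).Finite) : (MulAction.orbit M x).Finite :=
  (h.preimage sigma_mk_injective.injOn).subset fun _ ⟨g, hg⟩ => ⟨g, congrArg (Sigma.mk i) hg⟩

theorem Group.fg_of_subgroup_fg_of_finite_quotient {G : Type*} [Group G] {H : Subgroup G}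
    (hH : H.FG) [Finite (G ⧸ H)] : Group.FG G := by
  obtain ⟨S, hS⟩ := hH
  set T : Set G := Set.range (Quotient.out : G ⧸ H → G)
  refine Group.fg_iff.2
    ⟨S ∪ T, eq_top_iff.2 fun g _ => ?_, S.finite_toSet.union (Set.finite_range _)⟩
  have hHL : H ≤ Subgroup.closure (S ∪ T) := hS ▸ Subgroup.closure_mono Set.subset_union_left
  obtain ⟨h, hh⟩ := QuotientGroup.mk_out_eq_mul H g
  rw [eq_mul_inv_of_mul_eq hh.symm]
  exact mul_mem (Subgroup.subset_closure (Or.inr ⟨_, rfl⟩)) (hHL (inv_mem h.2))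

abbrev FGCosets (Γ : Type*) [Group Γ] : Type _ := Σ Δ : {Δ : Subgroup Γ // Δ.FG}, Γ ⧸ Δ.1

theorem FGCosets.exists_fixed {Γ : Type*} [Group Γ] (K : Finset Γ) :
    ∃ x : FGCosets Γ, ∀ k ∈ K, k • x = x := by
  refine ⟨⟨⟨Subgroup.closure K, K, rfl⟩, (1 : Γ)⟩, fun k hk => ?_⟩
  have hk1 : k • ((1 : Γ) : Γ ⧸ Subgroup.closure (K : Set Γ)) = (1 : Γ) := by
    rw [MulAction.Quotient.smul_mk, smul_eq_mul, mul_one]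
    exact QuotientGroup.eq.2 (by simpa using Subgroup.subset_closure hk)
  exact congrArg (Sigma.mk _) hk1

/-- A discrete group with property (T) — every unitary representation on a complex Hilbert
space with almost invariant vectors has a nonzero invariant vector — is finitely
generated. -/
theorem fg_of_property_T {Γ : Type u} [Group Γ]
    (hT : ∀ (H : Type u) [NormedAddCommGroup H] [InnerProductSpace ℂ H] [CompleteSpace H]
      (ρ : Γ →* (H ≃ₗᵢ[ℂ] H)),
      (∀ (K : Finset Γ) (ε : ℝ), 0 < ε →
        ∃ v : H, v ≠ 0 ∧ ∀ k ∈ K, ‖ρ k v - v‖ < ε * ‖v‖) →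
      ∃ v : H, v ≠ 0 ∧ ∀ γ : Γ, ρ γ v = v) :
    Group.FG Γ := by
  obtain ⟨f, hf0, hf⟩ := hT _ (lp.permRep ℂ ℂ (FGCosets Γ) 2 Γ)
    (lp.exists_almost_invariant_of_exists_fixed FGCosets.exists_fixed)
  obtain ⟨⟨Δ, x⟩, hx⟩ : ∃ i, f i ≠ 0 := by
    by_contra! h
    exact hf0 (lp.ext (funext h))
  have hfin : (MulAction.orbit Γ x).Finite := MulAction.finite_orbit_of_finite_orbit_sigma_mk
    (i := Δ) (lp.finite_orbit_of_forall_permRep_eq (by norm_num) hf hx)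
  have : Finite (Γ ⧸ Δ.1) := Set.finite_univ_iff.1 (MulAction.orbit_eq_univ Γ x ▸ hfin)
  exact Group.fg_of_subgroup_fg_of_finite_quotient Δ.2
end

section
/- There is no Borel probability measure on the real projective line ℙ¹ = ℙ(ℝ²) that is invariant under the natural action of SL₂(ℝ), i.e. no Borel probability measure μ on ℙ(ℝ²) such that for every g ∈ SL₂(ℝ), the pushforward of μ under the map [v] ↦ [g·v] equals μ. -/
open MeasureTheory Projectivization Topology

/-- The quotient topology on the real projective line `ℙ(ℝ²)`, induced from
`ℝ² \ {0}` via `v ↦ [v]`. -/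
instance : TopologicalSpace (Projectivization ℝ (Fin 2 → ℝ)) :=
  inferInstanceAs (TopologicalSpace (Quotient (projectivizationSetoid ℝ (Fin 2 → ℝ))))

/-- The Borel σ-algebra on the real projective line. -/
instance : MeasurableSpace (Projectivization ℝ (Fin 2 → ℝ)) := borel _


noncomputable section SL2Aux

abbrev P2 := Projectivization ℝ (Fin 2 → ℝ)

instance : BorelSpace P2 := ⟨rfl⟩

lemma v01_ne : (![0,1] : Fin 2 → ℝ) ≠ 0 := by
  intro h; have := congrFun h 1; simp at this

lemma v10_ne : (![1,0] : Fin 2 → ℝ) ≠ 0 := by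
  intro h; have := congrFun h 0; simp at this

def e2 : P2 := Projectivization.mk ℝ ![0,1] v01_ne
def e1 : P2 := Projectivization.mk ℝ ![1,0] v10_ne

lemma mk_eq_e2 {v : Fin 2 → ℝ} (hv : v ≠ 0) :
    Projectivization.mk ℝ v hv = e2 ↔ v 0 = 0 := by
  rw [e2, mk_eq_mk_iff']
  constructor
  · rintro ⟨a, rfl⟩; simp
  · intro h0
    refine ⟨v 1, ?_⟩
    funext i
    fin_cases i <;> simp [h0]

lemma mk_eq_e1 {v : Fin 2 → ℝ} (hv : v ≠ 0) :
    Projectivization.mk ℝ v hv = e1 ↔ v 1 = 0 := by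
  rw [e1, mk_eq_mk_iff']
  constructor
  · rintro ⟨a, rfl⟩; simp
  · intro h1
    refine ⟨v 0, ?_⟩
    funext i
    fin_cases i <;> simp [h1]

lemma e1_ne_e2 : e1 ≠ e2 := by
  rw [e1, Ne, mk_eq_e2]; norm_num

/-- The slope function on the projective line. -/
def slp : P2 → ℝ :=
  Projectivization.lift (fun v => v.1 1 / v.1 0) (by
    rintro ⟨a, ha⟩ ⟨b, hb⟩ t rfl
    simp only [Pi.smul_apply, smul_eq_mul]
    rcases eq_or_ne t 0 with rfl | ht
    · simp at ha
    · rw [mul_div_mul_left _ _ ht])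

lemma slp_mk (v : Fin 2 → ℝ) (hv : v ≠ 0) :
    slp (Projectivization.mk ℝ v hv) = v 1 / v 0 := rfl

lemma isQuotientMap_pmk :
    IsQuotientMap (Projectivization.mk' ℝ : {v : Fin 2 → ℝ // v ≠ 0} → P2) :=
  isQuotientMap_quot_mk

lemma isOpen_ne_e2 : IsOpen {x : P2 | x ≠ e2} := by
  rw [← isQuotientMap_pmk.isOpen_preimage]
  have : Projectivization.mk' ℝ ⁻¹' {x : P2 | x ≠ e2} =
      {v : {w : Fin 2 → ℝ // w ≠ 0} | v.1 0 ≠ 0} := by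
    ext ⟨v, hv⟩
    simp only [Set.mem_preimage, Set.mem_setOf_eq, mk'_eq_mk, Ne, mk_eq_e2]
  rw [this]
  exact ((continuous_apply 0).comp continuous_subtype_val).isOpen_preimage _ isOpen_ne

lemma measurableSet_e2 : MeasurableSet ({e2} : Set P2) := by
  have := isOpen_ne_e2.measurableSet
  simpa using this.compl

lemma measurable_slp : Measurable slp := by
  apply measurable_of_isOpen
  intro U hU
  have key : slp ⁻¹' U =
      (slp ⁻¹' U ∩ {x : P2 | x ≠ e2}) ∪ (slp ⁻¹' U ∩ {e2}) := by
    ext x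
    by_cases hx : x = e2 <;> simp [hx]
  rw [key]
  apply MeasurableSet.union
  · -- open part
    refine IsOpen.measurableSet ?_
    rw [← isQuotientMap_pmk.isOpen_preimage]
    have heq : Projectivization.mk' ℝ ⁻¹' (slp ⁻¹' U ∩ {x : P2 | x ≠ e2}) =
        {v : {w : Fin 2 → ℝ // w ≠ 0} | v.1 0 ≠ 0} ∩
          (fun v : {w : Fin 2 → ℝ // w ≠ 0} => v.1 1 / v.1 0) ⁻¹' U := by
      ext ⟨v, hv⟩
      simp only [Set.mem_preimage, Set.mem_inter_iff, Set.mem_setOf_eq, mk'_eq_mk, Ne,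
        mk_eq_e2, slp_mk]
      tauto
    rw [heq]
    apply ContinuousOn.isOpen_inter_preimage _ _ hU
    · apply ContinuousOn.div
      · exact ((continuous_apply 1).comp continuous_subtype_val).continuousOn
      · exact ((continuous_apply 0).comp continuous_subtype_val).continuousOn
      · exact fun v hv => hv
    · exact ((continuous_apply 0).comp continuous_subtype_val).isOpen_preimage _ isOpen_ne
  · rcases Set.eq_empty_or_nonempty (slp ⁻¹' U ∩ {e2}) with h | h
    · rw [h]; exact MeasurableSet.empty
    · have : slp ⁻¹' U ∩ {e2} = {e2} := by
        rcases h with ⟨x, hxU, hx⟩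
        rcases hx with rfl
        exact Set.inter_eq_right.mpr (by intro y hy; rcases hy with rfl; exact hxU)
      rw [this]; exact measurableSet_e2

/-- Continuity of projectivization.map for a continuous injective linear map. -/
lemma continuous_projmap (f : (Fin 2 → ℝ) →ₗ[ℝ] (Fin 2 → ℝ)) (hf : Function.Injective f) :
    Continuous (Projectivization.map f hf) := by
  have hfc : Continuous f := f.continuous_of_finiteDimensional
  exact Continuous.quotient_map'
    ((hfc.comp continuous_subtype_val).subtype_mk _) _

lemma measurable_projmap (f : (Fin 2 → ℝ) →ₗ[ℝ] (Fin 2 → ℝ)) (hf : Function.Injective f) :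
    Measurable (Projectivization.map f hf) :=
  (continuous_projmap f hf).measurable

end SL2Aux

noncomputable section Main
open Matrix

def pmat (t : ℝ) : Matrix.SpecialLinearGroup (Fin 2) ℝ :=
  ⟨!![1,0; t,1], by simp [Matrix.det_fin_two_of]⟩

def wmat : Matrix.SpecialLinearGroup (Fin 2) ℝ :=
  ⟨!![0,-1; 1,0], by simp [Matrix.det_fin_two_of]⟩

lemma sl_inj (g : Matrix.SpecialLinearGroup (Fin 2) ℝ) :
    Function.Injective (Matrix.toLin' (g : Matrix (Fin 2) (Fin 2) ℝ)) := by
  have h : IsUnit (g : Matrix (Fin 2) (Fin 2) ℝ) := by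
    apply (Matrix.isUnit_iff_isUnit_det _).mpr
    simp
  have h2 := Matrix.mulVec_injective_iff_isUnit.mpr h
  intro x y hxy
  exact h2 (by simpa [Matrix.toLin'_apply] using hxy)

lemma toLin'_pmat (t : ℝ) (v : Fin 2 → ℝ) :
    Matrix.toLin' ((pmat t : Matrix.SpecialLinearGroup (Fin 2) ℝ) : Matrix (Fin 2) (Fin 2) ℝ) v
      = ![v 0, t * v 0 + v 1] := by
  funext i
  fin_cases i <;>
    simp [pmat, Matrix.toLin'_apply, Matrix.mulVec, dotProduct, Fin.sum_univ_two]

lemma toLin'_wmat (v : Fin 2 → ℝ) :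
    Matrix.toLin' ((wmat : Matrix.SpecialLinearGroup (Fin 2) ℝ) : Matrix (Fin 2) (Fin 2) ℝ) v
      = ![-v 1, v 0] := by
  funext i
  fin_cases i <;>
    simp [wmat, Matrix.toLin'_apply, Matrix.mulVec, dotProduct, Fin.sum_univ_two]

lemma map_pmat_e2 (t : ℝ) (x : P2) :
    Projectivization.map
      (Matrix.toLin' ((pmat t : Matrix.SpecialLinearGroup (Fin 2) ℝ) : Matrix (Fin 2) (Fin 2) ℝ))
      (sl_inj (pmat t)) x = e2 ↔ x = e2 := by
  induction x using Projectivization.ind with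
  | h v hv =>
    rw [Projectivization.map_mk, mk_eq_e2, mk_eq_e2, toLin'_pmat]
    simp

lemma slp_map_pmat (t : ℝ) (x : P2) (hx : x ≠ e2) :
    slp (Projectivization.map
      (Matrix.toLin' ((pmat t : Matrix.SpecialLinearGroup (Fin 2) ℝ) : Matrix (Fin 2) (Fin 2) ℝ))
      (sl_inj (pmat t)) x) = slp x + t := by
  induction x using Projectivization.ind with
  | h v hv =>
    rw [Ne, mk_eq_e2] at hx
    rw [Projectivization.map_mk, slp_mk, slp_mk, toLin'_pmat]
    simp only [Matrix.cons_val_one, Matrix.head_cons, Matrix.cons_val_zero]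
    field_simp
    ring

lemma map_wmat_eq_e2 (x : P2) :
    Projectivization.map
      (Matrix.toLin' ((wmat : Matrix.SpecialLinearGroup (Fin 2) ℝ) : Matrix (Fin 2) (Fin 2) ℝ))
      (sl_inj wmat) x = e2 ↔ x = e1 := by
  induction x using Projectivization.ind with
  | h v hv =>
    rw [Projectivization.map_mk, mk_eq_e2, mk_eq_e1, toLin'_wmat]
    simp

end Main


/-- There is no Borel probability measure on the real projective line which is invariant
under the natural action of `SL₂(ℝ)`. -/
theorem no_SL2_invariant_measure_on_projective_line :
    ¬ ∃ μ : Measure (Projectivization ℝ (Fin 2 → ℝ)),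
      IsProbabilityMeasure μ ∧
        ∀ (g : Matrix.SpecialLinearGroup (Fin 2) ℝ)
          (hg : Function.Injective (Matrix.toLin' (g : Matrix (Fin 2) (Fin 2) ℝ))),
          Measure.map
            (Projectivization.map (Matrix.toLin' (g : Matrix (Fin 2) (Fin 2) ℝ)) hg) μ = μ := by
  rintro ⟨μ, hμ, hinv⟩
  set ν : Measure ℝ := Measure.map slp (μ.restrict {e2}ᶜ) with hν
  -- translation invariance of ν
  have hshift : ∀ t : ℝ, ∀ A : Set ℝ, MeasurableSet A → ν ((· + t) ⁻¹' A) = ν A := by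
    intro t A hA
    have hA' : MeasurableSet ((· + t) ⁻¹' A) := hA.preimage (measurable_add_const t)
    have hm := measurable_projmap _ (sl_inj (pmat t))
    have hS : MeasurableSet (slp ⁻¹' A ∩ {e2}ᶜ) :=
      (measurable_slp hA).inter measurableSet_e2.compl
    have h1 : ν ((· + t) ⁻¹' A) = μ (slp ⁻¹' ((· + t) ⁻¹' A) ∩ {e2}ᶜ) := by
      rw [hν, Measure.map_apply measurable_slp hA',
        Measure.restrict_apply (measurable_slp hA')]
    have hset : slp ⁻¹' ((· + t) ⁻¹' A) ∩ {e2}ᶜ =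
        (Projectivization.map
          (Matrix.toLin' ((pmat t : Matrix.SpecialLinearGroup (Fin 2) ℝ) :
            Matrix (Fin 2) (Fin 2) ℝ)) (sl_inj (pmat t))) ⁻¹' (slp ⁻¹' A ∩ {e2}ᶜ) := by
      ext x
      simp only [Set.mem_inter_iff, Set.mem_preimage, Set.mem_compl_iff,
        Set.mem_singleton_iff]
      constructor
      · rintro ⟨hxA, hxe⟩
        exact ⟨by rw [slp_map_pmat t x hxe]; exact hxA,
          fun h => hxe ((map_pmat_e2 t x).mp h)⟩
      · rintro ⟨hxA, hxe⟩
        have hx2 : x ≠ e2 := fun h => hxe ((map_pmat_e2 t x).mpr h)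
        exact ⟨by rw [← slp_map_pmat t x hx2]; exact hxA, hx2⟩
    rw [h1, hset, ← Measure.map_apply hm hS, hinv (pmat t) (sl_inj (pmat t)),
      hν, Measure.map_apply measurable_slp hA,
      Measure.restrict_apply (measurable_slp hA)]
  -- ν of integer intervals
  have hIco : ∀ n : ℤ, ν (Set.Ico (n : ℝ) (n + 1)) = ν (Set.Ico (0 : ℝ) 1) := by
    intro n
    have h := hshift (n : ℝ) (Set.Ico (n : ℝ) (n + 1)) measurableSet_Ico
    have hset : (· + (n : ℝ)) ⁻¹' Set.Ico (n : ℝ) (n + 1) = Set.Ico (0 : ℝ) 1 := by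
      ext x
      simp only [Set.mem_preimage, Set.mem_Ico]
      constructor <;> rintro ⟨h1, h2⟩ <;> constructor <;> linarith
    rw [hset] at h
    exact h.symm
  have huniv : ν Set.univ = μ {e2}ᶜ := by
    rw [hν, Measure.map_apply measurable_slp MeasurableSet.univ, Set.preimage_univ,
      Measure.restrict_apply MeasurableSet.univ, Set.univ_inter]
  -- ν is zero
  have hdisj : Pairwise (Function.onFun Disjoint fun n : ℤ => Set.Ico (n : ℝ) (n + 1)) := by
    intro m n hmn
    refine Set.disjoint_left.mpr fun x hx hx' => ?_
    simp only [Set.mem_Ico] at hx hx'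
    rcases hmn.lt_or_gt with h | h
    · have : (m : ℝ) + 1 ≤ n := by exact_mod_cast h
      linarith [hx.2, hx'.1]
    · have : (n : ℝ) + 1 ≤ m := by exact_mod_cast h
      linarith [hx'.2, hx.1]
  have hsum : ν Set.univ = ∑' n : ℤ, ν (Set.Ico (n : ℝ) (n + 1)) := by
    rw [← measure_iUnion hdisj fun n => measurableSet_Ico, iUnion_Ico_intCast ℝ]
  have hc0 : ν (Set.Ico (0 : ℝ) 1) = 0 := by
    by_contra hc
    have htop : (∑' _ : ℤ, ν (Set.Ico (0 : ℝ) 1)) = ⊤ :=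
      ENNReal.tsum_const_eq_top_of_ne_zero hc
    have : ν Set.univ = ⊤ := by
      rw [hsum]
      simp only [hIco]
      exact htop
    rw [huniv] at this
    exact (measure_ne_top μ _) this
  have hνuniv : ν Set.univ = 0 := by
    rw [hsum]
    simp [hIco, hc0]
  have hcompl0 : μ ({e2}ᶜ : Set P2) = 0 := by rw [← huniv]; exact hνuniv
  -- μ {e2} = 1
  have he2one : μ {e2} = 1 := by
    have h := measure_add_measure_compl (μ := μ) measurableSet_e2
    rw [hcompl0, add_zero, measure_univ] at h
    exact h
  -- use wmat
  have hW : μ ({e2} : Set P2) = μ {e1} := by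
    conv_lhs => rw [← hinv wmat (sl_inj wmat)]
    rw [Measure.map_apply (measurable_projmap _ (sl_inj wmat)) measurableSet_e2]
    congr 1
    ext x
    simp only [Set.mem_preimage, Set.mem_singleton_iff, map_wmat_eq_e2]
  have hle : μ ({e1} : Set P2) ≤ μ {e2}ᶜ :=
    measure_mono (Set.singleton_subset_iff.mpr e1_ne_e2)
  rw [he2one] at hW
  rw [hcompl0] at hle
  rw [← hW] at hle
  simp at hle
end

section
/- (Zassenhaus' theorem) Let n ∈ ℕ, let r > 1, and set Ω = {x ∈ GL_n(ℂ) : ‖x − 1‖ < 1/(8r)}, where ‖·‖ is the operator norm on n×n complex matrices and 1 is the identity matrix. If Γ is a discrete subgroup of GL_n(ℂ) (discrete in the subspace topology induced from the norm topology on matrices) which is generated by Γ ∩ Ω, then Γ is a nilpotent group. -/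
/-- The operator norm of an `n × n` complex matrix, i.e. the norm of the corresponding
bounded operator on the Euclidean space `ℂⁿ`. -/
noncomputable def matrixOpNorm {n : ℕ} (A : Matrix (Fin n) (Fin n) ℂ) : ℝ :=
  ‖Matrix.toEuclideanCLM (𝕜 := ℂ) A‖

/-!
Near the identity, commutators contract: if `‖a - 1‖, ‖b - 1‖ ≤ 1/8` then
`‖⁅a, b⁆ - 1‖ ≤ ‖a - 1‖ / 2`, because `⁅a, b⁆ - 1 = ((a - 1)(b - 1) - (b - 1)(a - 1)) a⁻¹ b⁻¹`.
Hence the left-normed commutators of weight `k + 1` in the generators from `Ω` lie within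
`2⁻ᵏ / 8` of the identity, so by discreteness those of some fixed weight are all trivial. A group
generated by a set in which all left-normed commutators of a fixed weight vanish is nilpotent:
peeling off one commutator at a time climbs the upper central series.
-/

open scoped commutatorElement

section IteratedCommutators

variable {G : Type*} [Group G]

/-- `leftCommutators T k` is the set of left-normed commutators `⁅⋯⁅⁅t₀, t₁⁆, t₂⁆, ⋯, tₖ⁆`
with all `tᵢ ∈ T`. -/
def leftCommutators (T : Set G) : ℕ → Set G
  | 0 => T
  | k + 1 => Set.image2 (fun c s => ⁅c, s⁆) (leftCommutators T k) T

theorem commutatorElement_mem_of_mem_closure {N : Subgroup G} [N.Normal] {c : G} {T : Set G}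
    (hT : ∀ s ∈ T, ⁅c, s⁆ ∈ N) {g : G} (hg : g ∈ Subgroup.closure T) : ⁅c, g⁆ ∈ N := by
  induction hg using Subgroup.closure_induction with
  | mem s hs => exact hT s hs
  | one => simp
  | mul x y _ _ hx hy =>
    have h : ⁅c, x * y⁆ = ⁅c, x⁆ * (x * ⁅c, y⁆ * x⁻¹) := by
      simp only [commutatorElement_def]; group
    exact h ▸ mul_mem hx (Subgroup.Normal.conj_mem ‹_› _ hy x)
  | inv x _ hx =>
    have h : ⁅c, x⁻¹⁆ = x⁻¹ * ⁅c, x⁆⁻¹ * x⁻¹⁻¹ := by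
      simp only [commutatorElement_def]; group
    exact h ▸ Subgroup.Normal.conj_mem ‹_› _ (inv_mem hx) x⁻¹

variable {T : Set G}

theorem leftCommutators_subset_upperCentralSeries_succ (hT : Subgroup.closure T = ⊤) {i k : ℕ}
    (h : leftCommutators T (k + 1) ⊆ Subgroup.upperCentralSeries G i) :
    leftCommutators T k ⊆ Subgroup.upperCentralSeries G (i + 1) := fun c hc ↦
  Subgroup.mem_upperCentralSeries_succ_iff.mpr fun y ↦
    commutatorElement_mem_of_mem_closure (fun s hs ↦ h ⟨c, hc, s, hs, rfl⟩)
      (hT ▸ Subgroup.mem_top y)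

theorem leftCommutators_subset_upperCentralSeries_add (hT : Subgroup.closure T = ⊤) {i : ℕ} :
    ∀ {j k : ℕ}, leftCommutators T (k + j) ⊆ Subgroup.upperCentralSeries G i →
      leftCommutators T k ⊆ Subgroup.upperCentralSeries G (i + j)
  | 0, _, h => h
  | j + 1, k, h => leftCommutators_subset_upperCentralSeries_succ hT <|
      leftCommutators_subset_upperCentralSeries_add hT (by rwa [Nat.add_right_comm])

theorem Group.isNilpotent_of_leftCommutators_eq_one (hT : Subgroup.closure T = ⊤) (m : ℕ)
    (h : ∀ x ∈ leftCommutators T m, x = 1) : Group.IsNilpotent G := by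
  have hTm : T ⊆ Subgroup.upperCentralSeries G m := by
    simpa [leftCommutators] using
      leftCommutators_subset_upperCentralSeries_add (i := 0) (j := m) (k := 0) hT
        (by simpa [Set.subset_def] using h)
  exact ⟨m, eq_top_iff.mpr (hT ▸ Subgroup.closure_le _ |>.mpr hTm)⟩

end IteratedCommutators

section NormedRing

variable {R : Type*} [NormedRing R]

theorem Units.norm_inv_le_of_norm_sub_one_le (hR : ‖(1 : R)‖ ≤ 1) {u : Rˣ}
    (hu : ‖(u : R) - 1‖ ≤ 1 / 8) : ‖(↑u⁻¹ : R)‖ ≤ 8 / 7 := by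
  have key : (↑u⁻¹ : R) = 1 - ↑u⁻¹ * ((u : R) - 1) := by
    rw [mul_sub, Units.inv_mul, mul_one, sub_sub_cancel]
  have : ‖(↑u⁻¹ : R)‖ ≤ 1 + ‖(↑u⁻¹ : R)‖ * (1 / 8) :=
    calc ‖(↑u⁻¹ : R)‖ = ‖1 - ↑u⁻¹ * ((u : R) - 1)‖ := congrArg norm key
      _ ≤ ‖(1 : R)‖ + ‖(↑u⁻¹ : R)‖ * ‖(u : R) - 1‖ :=
          (norm_sub_le _ _).trans (add_le_add_right (norm_mul_le _ _) _)
      _ ≤ 1 + ‖(↑u⁻¹ : R)‖ * (1 / 8) := by gcongr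
  linarith

theorem Units.coe_commutatorElement_sub_one (a b : Rˣ) :
    ((⁅a, b⁆ : Rˣ) : R) - 1 =
      (((a : R) - 1) * ((b : R) - 1) - ((b : R) - 1) * ((a : R) - 1)) * (↑a⁻¹ * ↑b⁻¹) := by
  have hba : (b : R) * a * (↑a⁻¹ * ↑b⁻¹) = 1 := by
    rw [mul_assoc, ← mul_assoc (a : R), Units.mul_inv, one_mul, Units.mul_inv]
  have hcomm : ((a : R) - 1) * ((b : R) - 1) - ((b : R) - 1) * ((a : R) - 1) = a * b - b * a := by
    noncomm_ring
  rw [hcomm, sub_mul, hba, commutatorElement_def]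
  simp only [Units.val_mul, mul_assoc]

theorem Units.norm_commutatorElement_sub_one_le (hR : ‖(1 : R)‖ ≤ 1) {a b : Rˣ}
    (ha : ‖(a : R) - 1‖ ≤ 1 / 8) (hb : ‖(b : R) - 1‖ ≤ 1 / 8) :
    ‖((⁅a, b⁆ : Rˣ) : R) - 1‖ ≤ ‖(a : R) - 1‖ / 2 := by
  have hab : ‖((a : R) - 1) * ((b : R) - 1) - ((b : R) - 1) * ((a : R) - 1)‖ ≤
      ‖(a : R) - 1‖ / 4 :=
    calc _ ≤ ‖(a : R) - 1‖ * ‖(b : R) - 1‖ + ‖(b : R) - 1‖ * ‖(a : R) - 1‖ :=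
          (norm_sub_le _ _).trans (add_le_add (norm_mul_le _ _) (norm_mul_le _ _))
      _ ≤ ‖(a : R) - 1‖ * (1 / 8) + 1 / 8 * ‖(a : R) - 1‖ := by gcongr
      _ = ‖(a : R) - 1‖ / 4 := by ring
  have hinv : ‖(↑a⁻¹ * ↑b⁻¹ : R)‖ ≤ 2 :=
    calc _ ≤ ‖(↑a⁻¹ : R)‖ * ‖(↑b⁻¹ : R)‖ := norm_mul_le _ _
      _ ≤ 8 / 7 * (8 / 7) := by
          gcongr <;> exact Units.norm_inv_le_of_norm_sub_one_le hR ‹_›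
      _ ≤ 2 := by norm_num
  calc _ ≤ ‖(a : R) - 1‖ / 4 * 2 := by
        rw [Units.coe_commutatorElement_sub_one]
        exact (norm_mul_le _ _).trans (by gcongr)
    _ = ‖(a : R) - 1‖ / 2 := by ring

theorem norm_leftCommutators_sub_one_le {G : Type*} [Group G] (hR : ‖(1 : R)‖ ≤ 1)
    (f : G →* Rˣ) {T : Set G} (hT : ∀ t ∈ T, ‖(f t : R) - 1‖ ≤ 1 / 8) :
    ∀ {k : ℕ}, ∀ x ∈ leftCommutators T k, ‖(f x : R) - 1‖ ≤ (1 / 2) ^ k / 8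
  | 0, x, hx => by simpa using hT x hx
  | k + 1, _, ⟨c, hc, s, hs, rfl⟩ => by
    have hc' := norm_leftCommutators_sub_one_le hR f hT c hc
    have hc8 : ‖(f c : R) - 1‖ ≤ 1 / 8 :=
      hc'.trans (div_le_div_of_nonneg_right (pow_le_one₀ (by norm_num) (by norm_num)) (by norm_num))
    calc _ ≤ ‖(f c : R) - 1‖ / 2 := by
          rw [map_commutatorElement]
          exact Units.norm_commutatorElement_sub_one_le hR hc8 (hT s hs)
      _ ≤ (1 / 2) ^ k / 8 / 2 := by gcongr
      _ = (1 / 2) ^ (k + 1) / 8 := by ring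

/-- Zassenhaus' theorem for the unit group of a normed ring. -/
theorem Units.isNilpotent_closure_of_norm_sub_one_le (hR : ‖(1 : R)‖ ≤ 1) {T : Set Rˣ}
    (hT : ∀ t ∈ T, ‖(t : R) - 1‖ ≤ 1 / 8)
    (hdisc : ∃ ε > (0 : ℝ), ∀ γ ∈ Subgroup.closure T, ‖(γ : R) - 1‖ < ε → γ = 1) :
    Group.IsNilpotent (Subgroup.closure T) := by
  obtain ⟨ε, hε, hdisc⟩ := hdisc
  obtain ⟨m, hm⟩ := exists_pow_lt_of_lt_one hε (by norm_num : (1 / 2 : ℝ) < 1)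
  refine Group.isNilpotent_of_leftCommutators_eq_one Subgroup.closure_closure_coe_preimage m
    fun x hx ↦ Subtype.ext (hdisc x x.2 ?_)
  calc _ ≤ (1 / 2) ^ m / 8 :=
        norm_leftCommutators_sub_one_le hR (Subgroup.closure T).subtype (fun t ht ↦ hT t ht) x hx
    _ < ε := by linarith [pow_pos (by norm_num : (0 : ℝ) < 1 / 2) m]

end NormedRing

open scoped Matrix.Norms.L2Operator in
/-- Zassenhaus' theorem: let `r > 1` and let
`Ω = {x ∈ GL_n(ℂ) : ‖x − 1‖ < 1/(8r)}` (operator norm). Every discrete subgroup of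
`GL_n(ℂ)` generated by its intersection with `Ω` is nilpotent. -/
theorem zassenhaus {n : ℕ} (r : ℝ) (hr : 1 < r)
    (Γ : Subgroup (Matrix.GeneralLinearGroup (Fin n) ℂ))
    (hdisc : ∀ γ ∈ Γ, ∃ ε > (0 : ℝ), ∀ δ ∈ Γ,
      matrixOpNorm ((δ : Matrix (Fin n) (Fin n) ℂ) - (γ : Matrix (Fin n) (Fin n) ℂ)) < ε →
        δ = γ)
    (hgen : Subgroup.closure
        ((Γ : Set (Matrix.GeneralLinearGroup (Fin n) ℂ)) ∩
          {x : Matrix.GeneralLinearGroup (Fin n) ℂ |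
            matrixOpNorm ((x : Matrix (Fin n) (Fin n) ℂ) - 1) < 1 / (8 * r)}) = Γ) :
    Group.IsNilpotent Γ := by
  have hnorm (A : Matrix (Fin n) (Fin n) ℂ) : matrixOpNorm A = ‖A‖ := rfl
  have hr8 : 1 / (8 * r) ≤ 1 / 8 := one_div_le_one_div_of_le (by norm_num) (by linarith)
  obtain ⟨ε, hε, hdisc1⟩ := hdisc 1 Γ.one_mem
  rw [← hgen] at hdisc1 ⊢
  refine Units.isNilpotent_closure_of_norm_sub_one_le ?_ (fun t ht ↦ ?_) ⟨ε, hε, fun γ hγ h ↦ ?_⟩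
  · rw [← hnorm, matrixOpNorm, map_one]
    exact ContinuousLinearMap.norm_id_le
  · exact (le_of_lt ht.2).trans hr8
  · exact hdisc1 γ hγ (by simpa [hnorm] using h)
end

section
/- (The Jordan theorem) For every n ∈ ℕ there exists m ∈ ℕ such that every finite subgroup Γ of GL_n(ℂ) has an abelian subgroup A ≤ Γ of index at most m in Γ. -/
/-!
Conjugating by `B` with `Bᴴ B = ∑_{g ∈ Γ} gᴴ g` makes a finite subgroup `Γ` of `GL_n(ℂ)` unitary.
In the Frobenius norm, which multiplication by unitary matrices preserves, all of them lie in the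
ball of radius `√n`. Let `A` be generated by the `g` with `‖g - 1‖ < 1/2`: elements of different
cosets of `A` are at distance at least `1/2`, so the index of `A` is at most a packing number of
that ball, which depends only on `n`.

`A` is abelian by Frobenius' argument. Since `‖⁅a, b⁆ - 1‖ ≤ 2 ‖a - 1‖ ‖b - 1‖`, if `‖a - 1‖ < 1/2`
and `b` is an element not commuting with `a`, with `‖b - 1‖ < 1` minimal, then `c = ⁅a, b⁆`
commutes with `a`. So all `c ^ k * b = a ^ k * b * a⁻¹ ^ k` have the trace of `b`, and the
projection `P` onto the fixed vectors of `c` satisfies `tr ((1 - P) (b - 1)) = -‖1 - P‖²`. By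
Cauchy–Schwarz `‖1 - P‖² ≤ ‖1 - P‖ ‖b - 1‖ < ‖1 - P‖`, whereas a nonzero projection has norm at
least `1`; hence `P = 1`, that is `c = 1`.
-/

open Matrix
open scoped NNReal ComplexOrder commutatorElement

attribute [local instance] Matrix.frobeniusNormedAddCommGroup Matrix.frobeniusNormedRing
  Matrix.frobeniusNormedSpace

lemma IsIdempotentElem.one_le_norm {R : Type*} [NonUnitalSeminormedRing R] {p : R}
    (hp : IsIdempotentElem p) (hp0 : 0 < ‖p‖) : 1 ≤ ‖p‖ := by
  refine (le_mul_iff_one_le_right hp0).mp ?_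
  nth_rw 1 [← hp.eq]
  exact norm_mul_le p p

section GroupAverage

variable {𝕜 R G : Type*} [RCLike 𝕜] [Ring R] [Algebra 𝕜 R] [Group G] [Fintype G]

variable (𝕜) in
noncomputable def groupAverage (ρ : G →* R) : R := (Fintype.card G : 𝕜)⁻¹ • ∑ g, ρ g

lemma mul_groupAverage (ρ : G →* R) (g : G) : ρ g * groupAverage 𝕜 ρ = groupAverage 𝕜 ρ := by
  rw [groupAverage, mul_smul_comm, Finset.mul_sum]
  simp_rw [← map_mul]
  exact congrArg _ (Equiv.sum_comp (Equiv.mulLeft g) ρ)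

lemma isIdempotentElem_groupAverage (ρ : G →* R) : IsIdempotentElem (groupAverage 𝕜 ρ) := by
  have hcard : (Fintype.card G : 𝕜) ≠ 0 := Nat.cast_ne_zero.mpr Fintype.card_ne_zero
  unfold IsIdempotentElem
  nth_rw 1 [groupAverage]
  rw [smul_mul_assoc, Finset.sum_mul]
  simp_rw [mul_groupAverage, Finset.sum_const, Finset.card_univ, ← Nat.cast_smul_eq_nsmul 𝕜,
    smul_smul, inv_mul_cancel₀ hcard, one_smul]

lemma isSelfAdjoint_groupAverage [StarRing R] [StarModule 𝕜 R] {ρ : G →* R}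
    (hρ : ∀ g, star (ρ g) = ρ g⁻¹) : IsSelfAdjoint (groupAverage 𝕜 ρ) := by
  rw [IsSelfAdjoint, groupAverage, star_smul, star_sum]
  simp_rw [hρ, star_inv₀, star_natCast]
  exact congrArg _ (Equiv.sum_comp (Equiv.inv G) ρ)

end GroupAverage

namespace Matrix

variable {𝕜 m n : Type*} [RCLike 𝕜] [Fintype m] [Fintype n]

lemma frobenius_norm_sq (A : Matrix m n 𝕜) : ‖A‖ ^ 2 = ∑ i, ∑ j, ‖A i j‖ ^ 2 := by
  rw [frobenius_norm_def, ← Real.rpow_natCast, ← Real.rpow_mul (by positivity)]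
  norm_num

lemma ofReal_frobenius_norm_sq (A : Matrix m n 𝕜) :
    ((‖A‖ ^ 2 : ℝ) : 𝕜) = (Aᴴ * A).trace := by
  simp only [frobenius_norm_sq, trace, diag, mul_apply, conjTranspose_apply, RCLike.star_def,
    RCLike.conj_mul, RCLike.ofReal_sum, RCLike.ofReal_pow]
  exact Finset.sum_comm

lemma norm_trace_mul_le (A : Matrix m n 𝕜) (B : Matrix n m 𝕜) :
    ‖(A * B).trace‖ ≤ ‖A‖ * ‖B‖ := by
  calc ‖(A * B).trace‖ = ‖∑ p : m × n, A p.1 p.2 * B p.2 p.1‖ := by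
        simp only [trace, diag, mul_apply, Fintype.sum_prod_type]
    _ ≤ ∑ p : m × n, ‖A p.1 p.2‖ * ‖B p.2 p.1‖ := by
        simpa only [norm_mul] using
          norm_sum_le Finset.univ fun p : m × n => A p.1 p.2 * B p.2 p.1
    _ ≤ √(∑ p : m × n, ‖A p.1 p.2‖ ^ 2) * √(∑ p : m × n, ‖B p.2 p.1‖ ^ 2) :=
        Real.sum_mul_le_sqrt_mul_sqrt _ _ _
    _ = ‖A‖ * ‖B‖ := by
        have hA : ∑ p : m × n, ‖A p.1 p.2‖ ^ 2 = ‖A‖ ^ 2 := by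
          rw [frobenius_norm_sq, Fintype.sum_prod_type]
        have hB : ∑ p : m × n, ‖B p.2 p.1‖ ^ 2 = ‖B‖ ^ 2 := by
          rw [frobenius_norm_sq, Fintype.sum_prod_type, Finset.sum_comm]
        rw [hA, hB, Real.sqrt_sq (norm_nonneg _), Real.sqrt_sq (norm_nonneg _)]

lemma frobenius_norm_eq_of_trace_eq {m' n' : Type*} [Fintype m'] [Fintype n'] {A : Matrix m n 𝕜}
    {B : Matrix m' n' 𝕜} (h : (Aᴴ * A).trace = (Bᴴ * B).trace) : ‖A‖ = ‖B‖ := by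
  rw [← ofReal_frobenius_norm_sq, ← ofReal_frobenius_norm_sq, RCLike.ofReal_inj] at h
  exact (sq_eq_sq₀ (norm_nonneg _) (norm_nonneg _)).mp h

lemma frobenius_norm_unitary_mul [DecidableEq m] {U : Matrix m m 𝕜}
    (hU : U ∈ unitary (Matrix m m 𝕜)) (A : Matrix m n 𝕜) : ‖U * A‖ = ‖A‖ :=
  frobenius_norm_eq_of_trace_eq <| by
    rw [conjTranspose_mul, ← star_eq_conjTranspose U, Matrix.mul_assoc,
      ← Matrix.mul_assoc (star U), Unitary.star_mul_self_of_mem hU, Matrix.one_mul]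

lemma frobenius_norm_mul_unitary [DecidableEq n] {U : Matrix n n 𝕜}
    (hU : U ∈ unitary (Matrix n n 𝕜)) (A : Matrix m n 𝕜) : ‖A * U‖ = ‖A‖ :=
  frobenius_norm_eq_of_trace_eq <| by
    rw [conjTranspose_mul, ← star_eq_conjTranspose U, Matrix.mul_assoc, trace_mul_comm,
      Matrix.mul_assoc, Matrix.mul_assoc, Unitary.mul_star_self_of_mem hU, Matrix.mul_one]

lemma frobenius_norm_of_mem_unitary [DecidableEq n] {U : Matrix n n 𝕜}
    (hU : U ∈ unitary (Matrix n n 𝕜)) : ‖U‖ = √(Fintype.card n) := by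
  rw [← Real.sqrt_sq (norm_nonneg U)]
  congr 1
  apply RCLike.ofReal_injective (K := 𝕜)
  rw [ofReal_frobenius_norm_sq, ← star_eq_conjTranspose, Unitary.star_mul_self_of_mem hU, trace_one]
  simp

lemma _root_.IsStarProjection.trace_eq_frobenius_norm_sq [DecidableEq n] {Q : Matrix n n 𝕜}
    (hQ : IsStarProjection Q) : Q.trace = ((‖Q‖ ^ 2 : ℝ) : 𝕜) := by
  rw [ofReal_frobenius_norm_sq, ← star_eq_conjTranspose, hQ.isSelfAdjoint.star_eq,
    hQ.isIdempotentElem.eq]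

lemma trace_groupAverage_mul [DecidableEq n] {G : Type*} [Group G] [Fintype G]
    (ρ : G →* Matrix n n 𝕜) (Y : Matrix n n 𝕜) :
    (groupAverage 𝕜 ρ * Y).trace = (Fintype.card G : 𝕜)⁻¹ * ∑ g, (ρ g * Y).trace := by
  rw [groupAverage, smul_mul_assoc, trace_smul, Finset.sum_mul, trace_sum, smul_eq_mul]

end Matrix

open Metric in
lemma TotallyBounded.packingNumber_ne_top {X : Type*} [PseudoEMetricSpace X] {K : Set X}
    (hK : TotallyBounded K) {ε : ℝ≥0} (hε : ε ≠ 0) : packingNumber ε K ≠ ⊤ := by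
  obtain ⟨N, -, hN, hcover⟩ := exists_finite_isCover_of_totallyBounded (ε := ε / 2)
    (by positivity) hK
  refine ne_top_of_le_ne_top hN.encard_lt_top.ne ?_
  calc packingNumber ε K = packingNumber (2 * (ε / 2)) K := by rw [mul_div_cancel₀ _ two_ne_zero]
    _ ≤ externalCoveringNumber (ε / 2) K := packingNumber_two_mul_le_externalCoveringNumber _ _
    _ ≤ N.encard := hcover.externalCoveringNumber_le_encard

lemma Subgroup.index_le_packingNumber {G X : Type*} [Group G] [PseudoEMetricSpace X]
    (H : Subgroup G) {f : G → X} {K : Set X} (hfK : ∀ g, f g ∈ K) {ε : ℝ≥0}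
    (hf : ∀ g h, g⁻¹ * h ∉ H → ε < edist (f g) (f h)) :
    (H.index : ℕ∞) ≤ Metric.packingNumber ε K := by
  set F : G ⧸ H → X := fun q => f q.out
  have hF : ∀ q₁ q₂, q₁ ≠ q₂ → ε < edist (F q₁) (F q₂) := fun q₁ q₂ hne =>
    hf _ _ fun hmem => hne (by simpa using (QuotientGroup.eq (s := H)).mpr hmem)
  have hFinj : Function.Injective F := fun q₁ q₂ h => by
    by_contra hne
    simpa [h] using hF q₁ q₂ hne
  have hsep : Metric.IsSeparated ε (Set.range F) := by
    rintro _ ⟨q₁, rfl⟩ _ ⟨q₂, rfl⟩ hne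
    exact hF q₁ q₂ fun h => hne (congrArg F h)
  calc (H.index : ℕ∞) ≤ ENat.card (G ⧸ H) := by
        rcases finite_or_infinite (G ⧸ H) with _ | _
        · rw [ENat.card_eq_coe_natCard, Subgroup.index]
        · simp [Subgroup.index, Nat.card_eq_zero_of_infinite]
    _ ≤ (Set.range F).encard := hFinj.encard_range
    _ ≤ Metric.packingNumber ε K :=
        hsep.encard_le_packingNumber (Set.range_subset_iff.mpr fun q => hfK _)

lemma Commute.conj_pow_eq_commutatorElement_pow_mul {G : Type*} [Group G] {a b : G}
    (h : Commute a ⁅a, b⁆) (k : ℕ) : a ^ k * b * (a ^ k)⁻¹ = ⁅a, b⁆ ^ k * b := by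
  induction k with
  | zero => simp
  | succ k ih =>
    calc a ^ (k + 1) * b * (a ^ (k + 1))⁻¹ = a * (a ^ k * b * (a ^ k)⁻¹) * a⁻¹ := by group
      _ = ⁅a, b⁆ ^ k * (a * b * a⁻¹) := by rw [ih, ← mul_assoc, (h.pow_right k).eq]; group
      _ = ⁅a, b⁆ ^ (k + 1) * b := by rw [pow_succ, commutatorElement_def]; group

section UnitaryRepresentation

variable {𝕜 n G : Type*} [RCLike 𝕜] [Fintype n] [DecidableEq n] [Group G]

theorem eq_one_of_forall_trace_mul_eq [Fintype G] (ρ : G →* unitary (Matrix n n 𝕜))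
    {Y : Matrix n n 𝕜} (hY : ‖Y - 1‖ < 1)
    (htr : ∀ g, ((ρ g : Matrix n n 𝕜) * Y).trace = Y.trace) : ρ = 1 := by
  set σ := (unitary (Matrix n n 𝕜)).subtype.comp ρ
  set P := groupAverage 𝕜 σ
  have hP : IsStarProjection P :=
    ⟨isIdempotentElem_groupAverage σ, isSelfAdjoint_groupAverage fun g => by simp [σ]⟩
  have hQ := hP.one_sub
  have htrP : (P * Y).trace = Y.trace := by
    simp [P, trace_groupAverage_mul, σ, htr]
  have htrQ : ((1 - P) * (Y - 1)).trace = -(1 - P).trace := by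
    rw [sub_mul, one_mul, mul_sub, mul_one, trace_sub, trace_sub, trace_sub, trace_sub, htrP]
    ring
  have hP1 : P = 1 := by
    refine (sub_eq_zero.mp ?_).symm
    by_contra hne
    have hpos := norm_pos_iff.mpr hne
    have hQ1 := hQ.isIdempotentElem.one_le_norm hpos
    have hQY : ‖1 - P‖ ^ 2 ≤ ‖1 - P‖ * ‖Y - 1‖ := by
      calc ‖1 - P‖ ^ 2 = ‖(1 - P).trace‖ := by
            rw [hQ.trace_eq_frobenius_norm_sq, RCLike.norm_ofReal, abs_of_nonneg (by positivity)]
        _ = ‖((1 - P) * (Y - 1)).trace‖ := by rw [htrQ, norm_neg]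
        _ ≤ ‖1 - P‖ * ‖Y - 1‖ := norm_trace_mul_le _ _
    nlinarith
  refine MonoidHom.ext fun g => Subtype.ext ?_
  have hgP : σ g * P = P := mul_groupAverage σ g
  rwa [hP1, mul_one] at hgP

lemma trace_map_conj (ρ : G →* unitary (Matrix n n 𝕜)) (g y : G) :
    (ρ (g * y * g⁻¹) : Matrix n n 𝕜).trace = (ρ y : Matrix n n 𝕜).trace := by
  rw [mul_assoc, map_mul, Submonoid.coe_mul, trace_mul_comm, ← Submonoid.coe_mul, ← map_mul,
    inv_mul_cancel_right]

theorem commute_of_commute_commutatorElement [Finite G] {ρ : G →* unitary (Matrix n n 𝕜)}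
    (hρ : Function.Injective ρ) {a b : G} (ha : Commute a ⁅a, b⁆)
    (hb : ‖(ρ b : Matrix n n 𝕜) - 1‖ < 1) : Commute a b := by
  have := Fintype.ofFinite G
  have htr : ∀ h : Subgroup.zpowers ⁅a, b⁆,
      ((ρ.comp (Subgroup.zpowers ⁅a, b⁆).subtype h : Matrix n n 𝕜) * ρ b).trace
        = (ρ b : Matrix n n 𝕜).trace := by
    rintro ⟨h, hh⟩
    obtain ⟨k, rfl⟩ := mem_powers_iff_mem_zpowers.mpr hh
    rw [MonoidHom.comp_apply, Subgroup.subtype_apply, ← Submonoid.coe_mul, ← map_mul,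
      ← ha.conj_pow_eq_commutatorElement_pow_mul, trace_map_conj]
  have hc := DFunLike.congr_fun (eq_one_of_forall_trace_mul_eq _ hb htr)
    ⟨_, Subgroup.mem_zpowers ⁅a, b⁆⟩
  exact commutatorElement_eq_one_iff_commute.mp ((map_eq_one_iff ρ hρ).mp hc)

lemma norm_commutatorElement_sub_one_le (u v : unitary (Matrix n n 𝕜)) :
    ‖((⁅u, v⁆ : unitary (Matrix n n 𝕜)) : Matrix n n 𝕜) - 1‖
      ≤ 2 * ‖(u : Matrix n n 𝕜) - 1‖ * ‖(v : Matrix n n 𝕜) - 1‖ := by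
  have key : (((⁅u, v⁆ : unitary (Matrix n n 𝕜)) : Matrix n n 𝕜) - 1) * (v * u : unitary _)
      = ((u : Matrix n n 𝕜) - 1) * (v - 1) - (v - 1) * (u - 1) := by
    rw [sub_mul, one_mul, ← Submonoid.coe_mul, commutatorElement_def,
      show u * v * u⁻¹ * v⁻¹ * (v * u) = u * v by group, Submonoid.coe_mul, Submonoid.coe_mul]
    noncomm_ring
  calc ‖((⁅u, v⁆ : unitary (Matrix n n 𝕜)) : Matrix n n 𝕜) - 1‖
      = ‖((u : Matrix n n 𝕜) - 1) * (v - 1) - (v - 1) * (u - 1)‖ := by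
        rw [← key, frobenius_norm_mul_unitary (v * u).2]
    _ ≤ ‖(u : Matrix n n 𝕜) - 1‖ * ‖(v : Matrix n n 𝕜) - 1‖
          + ‖(v : Matrix n n 𝕜) - 1‖ * ‖(u : Matrix n n 𝕜) - 1‖ :=
        (norm_sub_le _ _).trans (add_le_add (norm_mul_le _ _) (norm_mul_le _ _))
    _ = 2 * ‖(u : Matrix n n 𝕜) - 1‖ * ‖(v : Matrix n n 𝕜) - 1‖ := by ring

theorem commute_of_norm_sub_one_lt [Finite G] {ρ : G →* unitary (Matrix n n 𝕜)}
    (hρ : Function.Injective ρ) {a b : G} (ha : ‖(ρ a : Matrix n n 𝕜) - 1‖ < 1 / 2)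
    (hb : ‖(ρ b : Matrix n n 𝕜) - 1‖ < 1) : Commute a b := by
  by_contra hab
  obtain ⟨b₀, ⟨hab₀, hb₀⟩, hmin⟩ := Set.exists_min_image
    {x : G | ¬Commute a x ∧ ‖(ρ x : Matrix n n 𝕜) - 1‖ < 1}
    (fun x => ‖(ρ x : Matrix n n 𝕜) - 1‖) (Set.toFinite _) ⟨b, hab, hb⟩
  have hpos : 0 < ‖(ρ b₀ : Matrix n n 𝕜) - 1‖ := by
    refine norm_pos_iff.mpr (sub_ne_zero.mpr fun h => hab₀ ?_)
    rw [(map_eq_one_iff ρ hρ).mp (Subtype.ext h)]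
    exact Commute.one_right a
  have hlt : ‖(ρ ⁅a, b₀⁆ : Matrix n n 𝕜) - 1‖ < ‖(ρ b₀ : Matrix n n 𝕜) - 1‖ :=
    calc ‖(ρ ⁅a, b₀⁆ : Matrix n n 𝕜) - 1‖
        ≤ 2 * ‖(ρ a : Matrix n n 𝕜) - 1‖ * ‖(ρ b₀ : Matrix n n 𝕜) - 1‖ := by
          rw [map_commutatorElement]
          exact norm_commutatorElement_sub_one_le _ _
      _ < ‖(ρ b₀ : Matrix n n 𝕜) - 1‖ := by nlinarith
  have hac : Commute a ⁅a, b₀⁆ := by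
    by_contra h
    exact (hmin _ ⟨h, hlt.trans hb₀⟩).not_gt hlt
  exact hab₀ (commute_of_commute_commutatorElement hρ hac hb₀)

def nearOneSubgroup (ρ : G →* unitary (Matrix n n 𝕜)) : Subgroup G :=
  Subgroup.closure {g | ‖(ρ g : Matrix n n 𝕜) - 1‖ < 1 / 2}

lemma isMulCommutative_nearOneSubgroup [Finite G] {ρ : G →* unitary (Matrix n n 𝕜)}
    (hρ : Function.Injective ρ) : IsMulCommutative (nearOneSubgroup ρ) :=
  Subgroup.isMulCommutative_closure fun _ ha _ hb =>
    commute_of_norm_sub_one_lt hρ ha (hb.trans (by norm_num))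

lemma index_nearOneSubgroup_le (ρ : G →* unitary (Matrix n n 𝕜)) :
    ((nearOneSubgroup ρ).index : ℕ∞)
      ≤ Metric.packingNumber (1 / 4) (Metric.closedBall (0 : Matrix n n 𝕜) √(Fintype.card n)) := by
  refine Subgroup.index_le_packingNumber _ (f := fun g => (ρ g : Matrix n n 𝕜))
    (fun g => by simp [frobenius_norm_of_mem_unitary (ρ g).2]) fun g h hgh => ?_
  have hfar : 1 / 2 ≤ ‖(ρ (g⁻¹ * h) : Matrix n n 𝕜) - 1‖ :=
    not_lt.mp fun hlt => hgh (Subgroup.subset_closure hlt)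
  have hdist : dist (ρ g : Matrix n n 𝕜) (ρ h) = ‖(ρ (g⁻¹ * h) : Matrix n n 𝕜) - 1‖ := by
    rw [dist_eq_norm, norm_sub_rev, ← frobenius_norm_unitary_mul (ρ g⁻¹).2, mul_sub,
      ← Submonoid.coe_mul, ← map_mul, ← Submonoid.coe_mul, ← map_mul, inv_mul_cancel, map_one]
    rfl
  rw [edist_nndist, ENNReal.coe_lt_coe, ← NNReal.coe_lt_coe, coe_nndist, hdist]
  exact lt_of_lt_of_le (by norm_num) hfar

end UnitaryRepresentation

section Unitarization

variable {𝕜 n G : Type*} [RCLike 𝕜] [Fintype n] [DecidableEq n] [Group G] [Fintype G]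

open scoped MatrixOrder in
theorem exists_conj_mem_unitary (σ : G →* (Matrix n n 𝕜)ˣ) :
    ∃ b : (Matrix n n 𝕜)ˣ, ∀ g,
      ((b * σ g * b⁻¹ : (Matrix n n 𝕜)ˣ) : Matrix n n 𝕜) ∈ unitary (Matrix n n 𝕜) := by
  set P : Matrix n n 𝕜 := ∑ g, star (σ g : Matrix n n 𝕜) * σ g
  have hP : P.PosDef := posDef_sum Finset.univ_nonempty fun g _ =>
    PosDef.conjTranspose_mul_self _ (mulVec_injective_iff_isUnit.mpr (σ g).isUnit)
  have hinv : ∀ g, star (σ g : Matrix n n 𝕜) * P * σ g = P := fun g => by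
    simp only [P, Finset.mul_sum, Finset.sum_mul]
    refine Eq.trans ?_ (Equiv.sum_comp (Equiv.mulRight g) _)
    refine Finset.sum_congr rfl fun h _ => ?_
    simp only [Equiv.coe_mulRight, map_mul, Units.val_mul, star_mul]
    noncomm_ring
  obtain ⟨_, ⟨b, rfl⟩, hPb⟩ :=
    CStarAlgebra.isStrictlyPositive_iff_eq_star_mul_self.mp hP.isStrictlyPositive
  refine ⟨b, fun g => mem_unitaryGroup_iff'.mpr ?_⟩
  calc star ((b * σ g * b⁻¹ : (Matrix n n 𝕜)ˣ) : Matrix n n 𝕜) * ↑(b * σ g * b⁻¹)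
      = star (↑b⁻¹ : Matrix n n 𝕜) * (star (σ g : Matrix n n 𝕜) * P * σ g) * ↑b⁻¹ := by
        rw [hPb]
        simp only [Units.val_mul, star_mul]
        noncomm_ring
    _ = star ((b : Matrix n n 𝕜) * ↑b⁻¹) * (↑b * ↑b⁻¹) := by
        rw [hinv, hPb, star_mul]
        noncomm_ring
    _ = 1 := by rw [Units.mul_inv, star_one, one_mul]

theorem exists_injective_hom_unitary (σ : G →* (Matrix n n 𝕜)ˣ) (hσ : Function.Injective σ) :
    ∃ ρ : G →* unitary (Matrix n n 𝕜), Function.Injective ρ := by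
  obtain ⟨b, hb⟩ := exists_conj_mem_unitary σ
  refine ⟨((Units.coeHom _).comp ((MulAut.conj b).toMonoidHom.comp σ)).codRestrict _ hb,
    fun g h hgh => hσ ((MulAut.conj b).injective (Units.ext (congrArg Subtype.val hgh)))⟩

end Unitarization

/-- The Jordan theorem: for every `n` there is `m` such that every finite subgroup of
`GL_n(ℂ)` has an abelian subgroup of index at most `m`. -/
theorem jordan_theorem (n : ℕ) :
    ∃ m : ℕ, ∀ Γ : Subgroup (Matrix.GeneralLinearGroup (Fin n) ℂ),
      (Γ : Set (Matrix.GeneralLinearGroup (Fin n) ℂ)).Finite →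
      ∃ A : Subgroup Γ, A.index ≤ m ∧ ∀ a ∈ A, ∀ b ∈ A, a * b = b * a := by
  set K := Metric.closedBall (0 : Matrix (Fin n) (Fin n) ℂ) √n
  have hK : Metric.packingNumber (1 / 4) K ≠ ⊤ :=
    (isCompact_closedBall _ _).totallyBounded.packingNumber_ne_top (by norm_num)
  refine ⟨(Metric.packingNumber (1 / 4) K).toNat, fun Γ hΓ => ?_⟩
  have := hΓ.to_subtype
  have := Fintype.ofFinite Γ
  obtain ⟨ρ, hρ⟩ := exists_injective_hom_unitary Γ.subtype Γ.subtype_injective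
  have := isMulCommutative_nearOneSubgroup hρ
  refine ⟨nearOneSubgroup ρ, ?_, fun a ha b hb => setLike_mul_comm ha hb⟩
  have hindex := index_nearOneSubgroup_le ρ
  rw [Fintype.card_fin] at hindex
  simpa using ENat.toNat_le_toNat hindex hK
end
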